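/- arXiv:2007.00344 — 6 statements merged into one kernel-verified Lean document; each statement's English description precedes it below -/
import Mathlib

section
/- Let G be a finite abelian p-group of exponent p^n and let C be a cyclic group of order p^{n+1}. A homomorphism c : G → C/p^n C lies in the image of the map π_B : Hom(G, C) → Hom(G, C/p^n C) induced by the projection C → C/p^n C if and only if for every nonzero x ∈ G the order of c(x) is strictly less than the order of x. -/
/-!
Since `pⁿ G = 0`, a lift `f : G → ℤ/pⁿ⁺¹` of `c` is essentially `p • g` for some
`g : G → ℤ/pⁿ`. If `x` has order `pᵏ⁺¹`, then `pᵏ⁺¹ f(x) = 0` forces `pᵏ c(x) = 0`, so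
`|c x| < |x|`. Conversely, the order condition says exactly that `c` kills the `p`-torsion of
`G`, so `c` factors as `c x = h (p x)` with `h` defined on `pG`. Because `ℤ/pⁿ` is injective
among groups of exponent dividing `pⁿ`, `h` extends to `g : G → ℤ/pⁿ`, and `c = p • g` lifts.
-/

namespace ZMod

lemma exists_toAddCircle_eq {N : ℕ} [NeZero N] {u : UnitAddCircle} (hu : N • u = 0) :
    ∃ z : ZMod N, toAddCircle z = u := by
  obtain ⟨m, -, rfl⟩ := (AddCircle.nsmul_eq_zero_iff (NeZero.pos N)).mp hu
  exact ⟨m, by rw [toAddCircle_natCast, mul_one]⟩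

lemma exists_toAddCircle_comp_eq {N : ℕ} [NeZero N] {G : Type*} [AddCommGroup G]
    (hG : ∀ x : G, N • x = 0) (k : G →+ UnitAddCircle) :
    ∃ g : G →+ ZMod N, toAddCircle.comp g = k := by
  choose g hg using fun x ↦
    exists_toAddCircle_eq (N := N) (u := k x) (by rw [← map_nsmul, hG, map_zero])
  refine ⟨AddMonoidHom.mk' g fun x y ↦ toAddCircle_injective N ?_, AddMonoidHom.ext hg⟩
  rw [map_add, hg, hg, hg, map_add]

/-- The circle is divisible, hence injective, and its `N`-torsion is the image of `ZMod N`. -/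
theorem exists_comp_subtype_eq {N : ℕ} [NeZero N] {G : Type*} [AddCommGroup G]
    (hG : ∀ x : G, N • x = 0) (H : AddSubgroup G) (h : H →+ ZMod N) :
    ∃ g : G →+ ZMod N, g.comp H.subtype = h := by
  obtain ⟨k, hk⟩ := Module.Baer.extension_property_addMonoidHom
    (Module.Baer.of_divisible UnitAddCircle) H.subtype H.subtype_injective (toAddCircle.comp h)
  obtain ⟨g, rfl⟩ := exists_toAddCircle_comp_eq hG k
  exact ⟨g, AddMonoidHom.ext fun x ↦ toAddCircle_injective N (DFunLike.congr_fun hk x)⟩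

theorem exists_forall_nsmul_apply_eq {N m : ℕ} [NeZero N] {G : Type*} [AddCommGroup G]
    (hG : ∀ x : G, N • x = 0) (c : G →+ ZMod N) (hc : ∀ x : G, m • x = 0 → c x = 0) :
    ∃ g : G →+ ZMod N, ∀ x, m • g x = c x := by
  let φ := DistribSMul.toAddMonoidHom G m
  have hker : φ.rangeRestrict.ker ≤ c.ker := fun x hx ↦
    hc x (by simpa [φ] using congrArg Subtype.val (AddMonoidHom.mem_ker.mp hx))
  let h := φ.rangeRestrict.liftOfSurjective φ.rangeRestrict_surjective ⟨c, hker⟩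
  obtain ⟨g, hg⟩ := exists_comp_subtype_eq hG _ h
  refine ⟨g, fun x ↦ ?_⟩
  rw [← map_nsmul]
  exact (DFunLike.congr_fun hg (φ.rangeRestrict x)).trans
    (AddMonoidHom.liftOfRightInverse_comp_apply _ _ _ _ x)

/-- `z ↦ m z`, well defined because `m • mⁿ = mⁿ⁺¹`. -/
noncomputable def mulPowSucc (m n : ℕ) : ZMod (m ^ n) →+ ZMod (m ^ (n + 1)) :=
  lift (m ^ n) ⟨zmultiplesHom _ (m : ZMod (m ^ (n + 1))), by
    show ((m ^ n : ℕ) : ℤ) • (m : ZMod (m ^ (n + 1))) = 0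
    rw [zsmul_eq_mul, Int.cast_natCast, ← Nat.cast_mul, ← pow_succ, natCast_self]⟩

lemma castHom_mulPowSucc (m n : ℕ) (z : ZMod (m ^ n)) :
    castHom (pow_dvd_pow m n.le_succ) (ZMod (m ^ n)) (mulPowSucc m n z) = m • z := by
  obtain ⟨a, rfl⟩ := intCast_surjective z
  rw [mulPowSucc, lift_coe]
  show castHom _ _ (a • (m : ZMod (m ^ (n + 1)))) = m • (a : ZMod (m ^ n))
  rw [map_zsmul, map_natCast, zsmul_eq_mul, nsmul_eq_mul, mul_comm]

lemma pow_nsmul_castHom_eq_zero {m n k : ℕ} (hm : 0 < m) {y : ZMod (m ^ (n + 1))}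
    (hy : m ^ (k + 1) • y = 0) :
    m ^ k • castHom (pow_dvd_pow m n.le_succ) (ZMod (m ^ n)) y = 0 := by
  obtain ⟨a, rfl⟩ := intCast_surjective y
  rw [nsmul_eq_mul, ← Int.cast_natCast, ← Int.cast_mul, intCast_zmod_eq_zero_iff_dvd] at hy
  rw [map_intCast, nsmul_eq_mul, ← Int.cast_natCast, ← Int.cast_mul,
    intCast_zmod_eq_zero_iff_dvd]
  have hm' : (m : ℤ) ≠ 0 := by exact_mod_cast hm.ne'
  have key : ((m ^ n : ℕ) : ℤ) * m ∣ ((m ^ k : ℕ) * a) * m := by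
    convert hy using 1 <;> push_cast <;> ring
  exact (mul_dvd_mul_iff_right hm').mp key

end ZMod

theorem addOrderOf_castHom_apply_ne {p n j : ℕ} (hp : p.Prime) {G : Type*} [AddCommGroup G]
    (f : G →+ ZMod (p ^ (n + 1))) {x : G} (hx : p ^ j • x = 0) (hx0 : x ≠ 0) :
    addOrderOf (ZMod.castHom (pow_dvd_pow p n.le_succ) (ZMod (p ^ n)) (f x)) ≠ addOrderOf x := by
  obtain ⟨i, -, hi⟩ := (Nat.dvd_prime_pow hp).mp (addOrderOf_dvd_of_nsmul_eq_zero hx)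
  cases i with
  | zero => exact absurd (AddMonoid.addOrderOf_eq_one_iff.mp (by simpa using hi)) hx0
  | succ k =>
    intro hfx
    have hfx_tors : p ^ (k + 1) • f x = 0 :=
      addOrderOf_dvd_iff_nsmul_eq_zero.mp (hi ▸ addOrderOf_map_dvd f x)
    have hdvd := addOrderOf_dvd_of_nsmul_eq_zero (ZMod.pow_nsmul_castHom_eq_zero hp.pos hfx_tors)
    rw [hfx, hi, Nat.pow_dvd_pow_iff_le_right hp.one_lt] at hdvd
    omega

theorem AddMonoidHom.map_eq_zero_of_prime_nsmul_eq_zero {p : ℕ} (hp : p.Prime)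
    {G M : Type*} [AddMonoid G] [AddMonoid M] (c : G →+ M)
    (hc : ∀ x, addOrderOf (c x) = addOrderOf x → x = 0) {x : G} (hx : p • x = 0) : c x = 0 := by
  rcases (Nat.dvd_prime hp).mp (addOrderOf_dvd_of_nsmul_eq_zero hx) with hx1 | hxp
  · rw [AddMonoid.addOrderOf_eq_one_iff.mp hx1, map_zero]
  rcases (Nat.dvd_prime hp).mp (hxp ▸ addOrderOf_map_dvd c x) with hcx1 | hcxp
  · exact AddMonoid.addOrderOf_eq_one_iff.mp hcx1
  · rw [hc x (hcxp.trans hxp.symm), map_zero]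

theorem stmt1_general (p n : ℕ) [Fact p.Prime]
    (G : Type*) [AddCommGroup G]
    (hexp : ∀ g : G, (p ^ n) • g = 0)
    (c : G →+ ZMod (p ^ n)) :
    (∃ f : G →+ ZMod (p ^ (n + 1)),
        (ZMod.castHom (pow_dvd_pow p (Nat.le_succ n)) (ZMod (p ^ n))).toAddMonoidHom.comp f = c)
      ↔ ∀ x : G, addOrderOf (c x) = addOrderOf x → x = 0 := by
  have hp : p.Prime := Fact.out
  constructor
  · rintro ⟨f, rfl⟩ x hx
    by_contra hx0
    exact addOrderOf_castHom_apply_ne hp f (hexp x) hx0 hx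
  · intro hc
    obtain ⟨g, hg⟩ := ZMod.exists_forall_nsmul_apply_eq hexp c
      fun _ ↦ c.map_eq_zero_of_prime_nsmul_eq_zero hp hc
    refine ⟨(ZMod.mulPowSucc p n).comp g, AddMonoidHom.ext fun x ↦ ?_⟩
    exact (ZMod.castHom_mulPowSucc p n (g x)).trans (hg x)

/-- A homomorphism `c : G → C/pⁿC` lies in the image of
`π_B : Hom(G, C) → Hom(G, C/pⁿC)` (postcomposition with the projection
`C = Z/p^{n+1} → C/pⁿC = Z/pⁿ`) if and only if for every nonzero `x ∈ G`
the order of `c x` is strictly smaller than the order of `x`, i.e. iff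
`|c x| = |x|` implies `x = 0`. -/
theorem stmt1 (p n : ℕ) [Fact p.Prime] (hn : 0 < n)
    (G : Type*) [AddCommGroup G] [Finite G]
    (hpG : ∀ g : G, ∃ k : ℕ, p ^ k • g = 0)
    (hexp : ∀ g : G, (p ^ n) • g = 0)
    (hmax : ∃ g : G, addOrderOf g = p ^ n)
    (c : G →+ ZMod (p ^ n)) :
    (∃ f : G →+ ZMod (p ^ (n + 1)),
        (ZMod.castHom (pow_dvd_pow p (Nat.le_succ n)) (ZMod (p ^ n))).toAddMonoidHom.comp f = c)
      ↔ ∀ x : G, addOrderOf (c x) = addOrderOf x → x = 0 :=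
  stmt1_general p n G hexp c
end

section
/- Let G be a finite abelian p-group, T a subgroup of index p and M a subgroup of index p^2 of G. With ℓ(M), L(M) the G-levels of M and ℓ_T(M), L_T(M) the T-levels of M, one has ℓ(M) ≤ ℓ_T(M) ≤ min{L(M), L_T(M)}, and min{L(M), L_T(M)} equals L(M) when M is not contained in T and equals L_T(M) when M ⊆ T. -/
/-!
Fix `k` with `G[p^k] = G`. If `j ≤ i` with `T[p^i] ⊆ M` and `G[p^j] + M = G`, then `K = G[p^j]`
satisfies `K + M = G` and `K ∩ T ⊆ M`, which forces `p² = [G : M] = [K : K ∩ M]` to divide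
`[K : K ∩ T]`, a divisor of `[G : T] = p`. The same comparison with `T[p^j] + (M ∩ T) = T`
would give `T ⊆ M`. Hence every lower level index lies strictly below every upper one, which
gives the inequalities. For the minimum: if `M ⊄ T` then `T + M = G` since `T` has prime
index, so `T[p^j] + (M ∩ T) = T` implies `G[p^j] + M = G`; if `M ⊆ T` the modular law gives
the converse implication.
-/

/-- The `p^i`-torsion subgroup `G[p^i] = {x ∈ G : p^i • x = 0}`. -/
def pTors (p i : ℕ) (G : Type*) [AddCommGroup G] : AddSubgroup G where
  carrier := {x | (p ^ i) • x = 0}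
  zero_mem' := by simp
  add_mem' := by
    intro a b ha hb
    simp only [Set.mem_setOf_eq, smul_add] at *
    rw [ha, hb, add_zero]
  neg_mem' := by
    intro a ha
    simp only [Set.mem_setOf_eq, smul_neg] at *
    rw [ha, neg_zero]

/-- The lower `T`-level `ℓ_T(M) = 1 + max{ i : T[p^i] ⊆ M ∩ T }` of a subgroup `M`.
For `T = ⊤` this is the `G`-level `ℓ(M)`. -/
noncomputable def levelL (p : ℕ) {G : Type*} [AddCommGroup G] (T M : AddSubgroup G) : ℕ :=
  1 + sSup {i : ℕ | pTors p i G ⊓ T ≤ M ⊓ T}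

/-- The upper `T`-level `L_T(M) = min{ j : T[p^j] + (M ∩ T) = T }` of a subgroup `M`.
For `T = ⊤` this is the `G`-level `L(M)`. -/
noncomputable def levelU (p : ℕ) {G : Type*} [AddCommGroup G] (T M : AddSubgroup G) : ℕ :=
  sInf {j : ℕ | (pTors p j G ⊓ T) ⊔ (M ⊓ T) = T}

/-- The subgroup `pG` of `G`. -/
def pMul (p : ℕ) (G : Type*) [AddCommGroup G] : AddSubgroup G :=
  (AddMonoidHom.mk' (fun x : G => p • x) (fun a b => smul_add p a b)).range

theorem Nat.one_add_sSup_le_sInf {S U : Set ℕ} (hS : S.Nonempty) (hU : U.Nonempty)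
    (h : ∀ i ∈ S, ∀ j ∈ U, i < j) : 1 + sSup S ≤ sInf U := by
  obtain ⟨j, hj⟩ := hU
  have hbdd : BddAbove S := ⟨j, fun i hi => (h i hi j hj).le⟩
  have := h _ (Nat.sSup_mem hS hbdd) _ (Nat.sInf_mem ⟨j, hj⟩)
  omega

namespace AddSubgroup

variable {G : Type*} [AddCommGroup G]

theorem sup_eq_top_of_index_prime {T M : AddSubgroup G} (hT : T.index.Prime) (hMT : ¬ M ≤ T) :
    T ⊔ M = ⊤ := by
  have hmul := relIndex_mul_index (le_sup_left : T ≤ T ⊔ M)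
  rcases hT.eq_one_or_self_of_dvd _ (Dvd.intro_left _ hmul) with h | h
  · exact index_eq_one.mp h
  · rw [h, Nat.mul_eq_right hT.ne_zero, relIndex_eq_one] at hmul
    exact absurd (le_sup_right.trans hmul) hMT

theorem index_dvd_index_of_sup_eq_top_of_inf_le {K T M : AddSubgroup G} (hKM : K ⊔ M = ⊤)
    (hKT : K ⊓ T ≤ M) : M.index ∣ T.index := by
  calc M.index = (M ⊓ K).relIndex K := by
        rw [inf_relIndex_right, ← relIndex_sup_right, hKM, relIndex_top_right]
    _ ∣ (T ⊓ K).relIndex K :=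
        relIndex_dvd_of_le_left K (le_inf ((inf_comm T K).le.trans hKT) inf_le_right)
    _ = T.relIndex K := inf_relIndex_right T K
    _ ∣ T.index := relIndex_dvd_index_of_normal T K

end AddSubgroup

section Levels

variable {p : ℕ} {G : Type*} [AddCommGroup G]

theorem mem_pTors {i : ℕ} {x : G} : x ∈ pTors p i G ↔ (p ^ i) • x = 0 := Iff.rfl

theorem pTors_mono {i j : ℕ} (h : i ≤ j) : pTors p i G ≤ pTors p j G := by
  intro x hx
  rw [mem_pTors] at hx ⊢
  rw [← Nat.sub_add_cancel h, pow_add, mul_smul, hx, smul_zero]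

theorem pTors_zero : pTors p 0 G = ⊥ := by
  ext x
  simp [mem_pTors]

theorem exists_pTors_eq_top [Finite G] (hpG : ∀ g : G, ∃ k : ℕ, p ^ k • g = 0) :
    ∃ k, pTors p k G = ⊤ := by
  choose e he using hpG
  obtain ⟨k, hk⟩ := (Set.finite_range e).bddAbove
  refine ⟨k, eq_top_iff.mpr fun g _ => ?_⟩
  exact pTors_mono (hk (Set.mem_range_self g)) (he g)

variable (p) in
def lowerLevelSet (T M : AddSubgroup G) : Set ℕ := {i | pTors p i G ⊓ T ≤ M ⊓ T}

variable (p) in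
def upperLevelSet (T M : AddSubgroup G) : Set ℕ := {j | (pTors p j G ⊓ T) ⊔ (M ⊓ T) = T}

variable {T M : AddSubgroup G}

theorem levelL_eq : levelL p T M = 1 + sSup (lowerLevelSet p T M) := rfl

theorem mem_lowerLevelSet_top {i : ℕ} : i ∈ lowerLevelSet p ⊤ M ↔ pTors p i G ≤ M := by
  simp [lowerLevelSet]

theorem mem_upperLevelSet_top {j : ℕ} : j ∈ upperLevelSet p ⊤ M ↔ pTors p j G ⊔ M = ⊤ := by
  simp [upperLevelSet]

theorem zero_mem_lowerLevelSet : 0 ∈ lowerLevelSet p T M := by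
  simp [lowerLevelSet, pTors_zero]

theorem mem_upperLevelSet_of_pTors_eq_top {k : ℕ} (hk : pTors p k G = ⊤) :
    k ∈ upperLevelSet p T M := by
  simp [upperLevelSet, hk]

theorem lowerLevelSet_top_subset : lowerLevelSet p ⊤ M ⊆ lowerLevelSet p T M :=
  fun _ hi => inf_le_inf_right T (mem_lowerLevelSet_top.mp hi)

theorem lt_of_mem_lowerLevelSet_of_mem_upperLevelSet (hTM : ¬ T ≤ M) {i j : ℕ}
    (hi : i ∈ lowerLevelSet p T M) (hj : j ∈ upperLevelSet p T M) : i < j := by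
  by_contra! hji
  have hi' : pTors p i G ⊓ T ≤ M ⊓ T := hi
  have hj' : (pTors p j G ⊓ T) ⊔ (M ⊓ T) = T := hj
  refine hTM (calc T = (pTors p j G ⊓ T) ⊔ (M ⊓ T) := hj'.symm
    _ ≤ M ⊓ T := sup_le ((inf_le_inf_right T (pTors_mono hji)).trans hi') le_rfl
    _ ≤ M := inf_le_left)

theorem lt_of_mem_lowerLevelSet_of_mem_upperLevelSet_top (hMT : ¬ M.index ∣ T.index) {i j : ℕ}
    (hi : i ∈ lowerLevelSet p T M) (hj : j ∈ upperLevelSet p ⊤ M) : i < j := by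
  by_contra! hji
  exact hMT (AddSubgroup.index_dvd_index_of_sup_eq_top_of_inf_le (mem_upperLevelSet_top.mp hj)
    (((inf_le_inf_right T (pTors_mono hji)).trans hi).trans inf_le_left))

theorem upperLevelSet_subset_top_of_sup_eq_top (hTM : T ⊔ M = ⊤) :
    upperLevelSet p T M ⊆ upperLevelSet p ⊤ M := by
  intro j hj
  rw [mem_upperLevelSet_top, eq_top_iff, ← hTM]
  refine sup_le ?_ le_sup_right
  rw [← show _ = T from hj]
  exact sup_le_sup inf_le_left inf_le_left

theorem upperLevelSet_top_subset_of_le (hMT : M ≤ T) :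
    upperLevelSet p ⊤ M ⊆ upperLevelSet p T M := by
  intro j hj
  change _ ⊔ _ = T
  rw [inf_eq_left.mpr hMT, sup_comm, ← sup_inf_assoc_of_le _ hMT, sup_comm,
    mem_upperLevelSet_top.mp hj, top_inf_eq]

end Levels

/-- For `T` of index `p` and `M` of index `p²` in `G`:
`ℓ(M) ≤ ℓ_T(M) ≤ min{L(M), L_T(M)}`, and the minimum is `L(M)` if `M ⊄ T`
and `L_T(M)` if `M ⊆ T`. -/
theorem stmt6 (p : ℕ) [Fact p.Prime] (G : Type*) [AddCommGroup G] [Finite G]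
    (hpG : ∀ g : G, ∃ k : ℕ, p ^ k • g = 0)
    (T M : AddSubgroup G) (hT : T.index = p) (hM : M.index = p ^ 2) :
    levelL p ⊤ M ≤ levelL p T M ∧
    levelL p T M ≤ min (levelU p ⊤ M) (levelU p T M) ∧
    (¬ M ≤ T → min (levelU p ⊤ M) (levelU p T M) = levelU p ⊤ M) ∧
    (M ≤ T → min (levelU p ⊤ M) (levelU p T M) = levelU p T M) := by
  have hp : p.Prime := Fact.out
  obtain ⟨k, hk⟩ := exists_pTors_eq_top hpG
  have hindex : ¬ M.index ∣ T.index := by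
    rw [hM, hT]
    intro h
    nlinarith [Nat.le_of_dvd hp.pos h, hp.two_le]
  have hTM : ¬ T ≤ M := fun h => hindex (AddSubgroup.index_dvd_of_le h)
  have hsep : ∀ i ∈ lowerLevelSet p T M, ∀ j ∈ upperLevelSet p T M, i < j :=
    fun _ hi _ hj => lt_of_mem_lowerLevelSet_of_mem_upperLevelSet hTM hi hj
  have hsepTop : ∀ i ∈ lowerLevelSet p T M, ∀ j ∈ upperLevelSet p ⊤ M, i < j :=
    fun _ hi _ hj => lt_of_mem_lowerLevelSet_of_mem_upperLevelSet_top hindex hi hj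
  have hkT : k ∈ upperLevelSet p T M := mem_upperLevelSet_of_pTors_eq_top hk
  have hkTop : k ∈ upperLevelSet p ⊤ M := mem_upperLevelSet_of_pTors_eq_top hk
  refine ⟨?_, ?_, fun hMT => ?_, fun hMT => ?_⟩
  · rw [levelL_eq, levelL_eq]
    gcongr 1 + ?_
    exact csSup_le_csSup' ⟨k, fun i hi => (hsep i hi k hkT).le⟩ lowerLevelSet_top_subset
  · exact le_min (Nat.one_add_sSup_le_sInf ⟨0, zero_mem_lowerLevelSet⟩ ⟨k, hkTop⟩ hsepTop)
      (Nat.one_add_sSup_le_sInf ⟨0, zero_mem_lowerLevelSet⟩ ⟨k, hkT⟩ hsep)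
  · refine min_eq_left (csInf_le_csInf' ⟨k, hkT⟩ ?_)
    exact upperLevelSet_subset_top_of_sup_eq_top
      (AddSubgroup.sup_eq_top_of_index_prime (hT ▸ hp) hMT)
  · exact min_eq_right (csInf_le_csInf' ⟨k, hkTop⟩ (upperLevelSet_top_subset_of_le hMT))
end

section
/- Let p be an odd prime and G a finite abelian p-group of exponent p^n with fixed decomposition G = ⊕_{j=1}^t I_j where I_j is a free Z/p^{n_j}-module of rank r_j and n_1 < n_2 < ... < n_t = n. Let C be cyclic of order p^{n+1}, and write Ĝ = Hom(G, C/p^n C). Say two homomorphisms f, g ∈ Ĝ are Bockquivalent if there exist an automorphism σ of G, a unit λ ∈ Z_p^*, and ε in the image of π_B : Hom(G,C) → Ĝ such that g = λ·(f ∘ σ^{-1}) + ε. Then G has exactly t + 1 Bockquivalence classes. -/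
/-- Bockquivalence: `f ≈ g` iff `g = λ·(f ∘ σ⁻¹) + ε` for some automorphism `σ` of
`G`, some unit `λ ∈ Z_p^*` (acting through `Z_p → Z/p^N`), and some `ε` in the image
of `π_B : Hom(G, C) → Hom(G, C/p^N C)`, where `C = Z/p^{N+1}` and `C/p^N C = Z/p^N`. -/
def BockEquiv (p N : ℕ) [Fact p.Prime] (G : Type*) [AddCommGroup G]
    (f g : G →+ ZMod (p ^ N)) : Prop :=
  ∃ (σ : G ≃+ G) (lam : (PadicInt p)ˣ) (e : G →+ ZMod (p ^ (N + 1))),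
    ∀ x : G,
      g x = PadicInt.toZModPow N (lam : PadicInt p) * f (σ.symm x)
        + ZMod.castHom (pow_dvd_pow p (Nat.le_succ N)) (ZMod (p ^ N)) (e x)

/-!
Classes are detected by `topBlock f`, the last block `j` such that some element of order
`p ^ n j` keeps its order under `f`. Automorphisms and unit multiples do not change orders,
and neither does adding `ε = π_B e` at an element `x` of order `p ^ s`: then
`p ^ (s - 1) • ε x = 0`, because the elements of `ZMod (p ^ (N + 1))` killed by `p` reduce to
`0` in `ZMod (p ^ N)`.

Conversely, on a generator of order `p ^ k` whose order `f` does not preserve, the value of `f`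
lifts to an element of `ZMod (p ^ (N + 1))` killed by `p ^ k`. Hence `f` is equivalent to its
restriction to the other generators. If these lie in blocks `≤ m`, that restriction lands in
the copy of `ZMod (p ^ n m)` inside `ZMod (p ^ N)`; as it has a value of full order on a
generator of block `m`, it is a coordinate of an automorphism `σ`, i.e. it equals `γ_m^* ∘ σ`.
-/

open Finset

variable {p : ℕ}

theorem ZMod.nsmul_eq_zero_iff_dvd_mul_val {m : ℕ} [NeZero m] (k : ℕ) (y : ZMod m) :
    k • y = 0 ↔ m ∣ k * y.val := by
  conv_lhs => rw [← ZMod.natCast_zmod_val y]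
  rw [nsmul_eq_mul, ← Nat.cast_mul, ZMod.natCast_eq_zero_iff]

def ZMod.homOfNsmul {T : Type*} [AddCommGroup T] (m : ℕ) (v : T) (hv : m • v = 0) :
    ZMod m →+ T :=
  ZMod.lift m ⟨zmultiplesHom T v, by simpa using hv⟩

theorem ZMod.homOfNsmul_intCast {T : Type*} [AddCommGroup T] {m : ℕ} {v : T} (hv : m • v = 0)
    (c : ℤ) : ZMod.homOfNsmul m v hv c = c • v := by
  simp [ZMod.homOfNsmul]

theorem ZMod.homOfNsmul_one {T : Type*} [AddCommGroup T] {m : ℕ} {v : T} (hv : m • v = 0) :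
    ZMod.homOfNsmul m v hv 1 = v := by
  simpa using ZMod.homOfNsmul_intCast hv 1

theorem ZMod.homOfNsmul_apply {T : Type*} [AddCommGroup T] {m : ℕ} [NeZero m] {v : T}
    (hv : m • v = 0) (c : ZMod m) : ZMod.homOfNsmul m v hv c = c.val • v := by
  conv_lhs => rw [← ZMod.natCast_zmod_val c]
  rw [← Int.cast_natCast, ZMod.homOfNsmul_intCast, natCast_zsmul]

theorem ZMod.eq_zero_of_val_nsmul_eq_zero {T : Type*} [AddCommGroup T] {m : ℕ} [NeZero m]
    {v : T} (hv : addOrderOf v = m) {c : ZMod m} (h : c.val • v = 0) : c = 0 := by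
  rw [← ZMod.val_eq_zero]
  have hdvd := addOrderOf_dvd_of_nsmul_eq_zero h
  rw [hv] at hdvd
  exact Nat.eq_zero_of_dvd_of_lt hdvd c.val_lt

theorem addOrderOf_mul_of_isUnit {R : Type*} [Ring R] {u : R} (hu : IsUnit u) (a : R) :
    addOrderOf (u * a) = addOrderOf a :=
  addOrderOf_injective (AddMonoidHom.mulLeft u) hu.mul_right_injective a

theorem AddMonoidHom.exists_comp_eq_of_forall_mem_range {A B G : Type*} [AddGroup A]
    [AddGroup B] [AddGroup G] {ι : A →+ B} (hι : Function.Injective ι) (f : G →+ B)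
    (hf : ∀ x, f x ∈ ι.range) : ∃ d : G →+ A, ι.comp d = f :=
  ⟨(AddMonoidHom.ofInjective hι).symm.toAddMonoidHom.comp (f.codRestrict _ hf),
    AddMonoidHom.ext fun x => by simp [AddMonoidHom.apply_ofInjective_symm]⟩

def PreservesOrderPow (p : ℕ) {G H : Type*} [AddCommGroup G] [AddCommGroup H] (f : G →+ H)
    (s : ℕ) : Prop :=
  ∃ x, addOrderOf x = p ^ s ∧ addOrderOf (f x) = p ^ s

def zmodPowEmbedding (p s N : ℕ) : ZMod (p ^ s) →+ ZMod (p ^ N) :=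
  ZMod.homOfNsmul _ ((p ^ (N - s) : ℕ) : ZMod (p ^ N)) <| by
    rw [nsmul_eq_mul, ← Nat.cast_mul, ← pow_add, ZMod.natCast_eq_zero_iff]
    exact pow_dvd_pow p (by omega)

section BlockGroup

variable {t : ℕ} {n r : Fin t → ℕ} {N : ℕ}

abbrev BlockGroup (p : ℕ) {t : ℕ} (n r : Fin t → ℕ) : Type :=
  ∀ j : Fin t, Fin (r j) → ZMod (p ^ n j)

def gen (k : Fin t) (i : Fin (r k)) : BlockGroup p n r :=
  Pi.single k (Pi.single i 1)

theorem addOrderOf_gen (k : Fin t) (i : Fin (r k)) :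
    addOrderOf (gen k i : BlockGroup p n r) = p ^ n k := by
  rw [gen, ← AddMonoidHom.single_apply,
    addOrderOf_injective _ (Pi.single_injective (M := fun j => Fin (r j) → ZMod (p ^ n j)) k),
    ← AddMonoidHom.single_apply,
    addOrderOf_injective _ (Pi.single_injective (M := fun _ => ZMod (p ^ n k)) i),
    ZMod.addOrderOf_one]

theorem pow_smul_map_gen {T : Type*} [AddCommGroup T] (f : BlockGroup p n r →+ T)
    (k : Fin t) (i : Fin (r k)) : p ^ n k • f (gen k i) = 0 := by
  rw [← map_nsmul, ← addOrderOf_gen k i, addOrderOf_nsmul_eq_zero, map_zero]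

def homOfGen {T : Type*} [AddCommGroup T] (a : ∀ k, Fin (r k) → T)
    (ha : ∀ k i, p ^ n k • a k i = 0) : BlockGroup p n r →+ T :=
  AddMonoidHom.noncommPiCoprod
    (fun k => AddMonoidHom.noncommPiCoprod (fun i => ZMod.homOfNsmul _ (a k i) (ha k i))
      (show Pairwise _ from fun _ _ _ _ _ => AddCommute.all _ _))
    (show Pairwise _ from fun _ _ _ _ _ => AddCommute.all _ _)

theorem homOfGen_gen {T : Type*} [AddCommGroup T] (a : ∀ k, Fin (r k) → T)
    (ha : ∀ k i, p ^ n k • a k i = 0) (k : Fin t) (i : Fin (r k)) :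
    homOfGen a ha (gen k i) = a k i := by
  rw [homOfGen, gen, AddMonoidHom.noncommPiCoprod_single, AddMonoidHom.noncommPiCoprod_single,
    ZMod.homOfNsmul_one]

open Classical in
noncomputable def restrictCoords (P : ∀ k, Fin (r k) → Prop) :
    BlockGroup p n r →+ BlockGroup p n r :=
  AddMonoidHom.mk' (fun x k i => if P k i then x k i else 0) fun x y => by
    funext k i
    simp only [Pi.add_apply]
    split_ifs <;> simp

open Classical in
theorem restrictCoords_gen (P : ∀ k, Fin (r k) → Prop) (k : Fin t) (i : Fin (r k)) :
    restrictCoords P (gen k i : BlockGroup p n r) = if P k i then gen k i else 0 := by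
  funext k' i'
  rcases eq_or_ne k' k with rfl | hk
  · rcases eq_or_ne i' i with rfl | hi
    · split_ifs <;> simp [restrictCoords, gen, *]
    · split_ifs <;> simp [restrictCoords, gen, hi]
  · split_ifs <;> simp [restrictCoords, gen, hk]

theorem pow_smul_restrictCoords_eq_zero {P : ∀ k, Fin (r k) → Prop} {s : ℕ}
    (h : ∀ k i, P k i → n k ≤ s) (x : BlockGroup p n r) :
    p ^ s • restrictCoords P x = 0 := by
  funext k i
  simp only [restrictCoords, AddMonoidHom.mk'_apply, Pi.smul_apply, Pi.zero_apply]
  split_ifs with hP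
  · rw [nsmul_eq_mul, (ZMod.natCast_eq_zero_iff _ _).mpr (pow_dvd_pow p (h k i hP)), zero_mul]
  · exact smul_zero _

def PreservesGenOrder (f : BlockGroup p n r →+ ZMod (p ^ N)) (k : Fin t) (i : Fin (r k)) :
    Prop :=
  addOrderOf (f (gen k i)) = p ^ n k

noncomputable def fullPart (f : BlockGroup p n r →+ ZMod (p ^ N)) :
    BlockGroup p n r →+ ZMod (p ^ N) :=
  f.comp (restrictCoords (PreservesGenOrder f))

open Classical in
noncomputable def topBlock (f : BlockGroup p n r →+ ZMod (p ^ N)) : WithBot (Fin t) :=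
  (univ.filter fun k => ∃ i, PreservesGenOrder f k i).max

theorem le_topBlock {f : BlockGroup p n r →+ ZMod (p ^ N)} {k : Fin t} {i : Fin (r k)}
    (h : PreservesGenOrder f k i) : (k : WithBot (Fin t)) ≤ topBlock f := by
  classical
  exact Finset.le_max (mem_filter.mpr ⟨mem_univ _, i, h⟩)

theorem exists_preservesGenOrder_of_topBlock_eq {f : BlockGroup p n r →+ ZMod (p ^ N)}
    {m : Fin t} (h : topBlock f = m) : ∃ i, PreservesGenOrder f m i := by
  classical
  exact (mem_filter.mp (Finset.mem_of_max h)).2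

-- The representative `γ_m^*` of the paper, for `i₀ = 0`.
def gammaStar (m : Fin t) (i₀ : Fin (r m)) : BlockGroup p n r →+ ZMod (p ^ N) :=
  (zmodPowEmbedding p (n m) N).comp
    ((Pi.evalAddMonoidHom (fun _ => ZMod (p ^ n m)) i₀).comp
      (Pi.evalAddMonoidHom (fun j => Fin (r j) → ZMod (p ^ n j)) m))

noncomputable def classRep (hr : ∀ j, 0 < r j) :
    WithBot (Fin t) → (BlockGroup p n r →+ ZMod (p ^ N)) :=
  WithBot.recBotCoe 0 fun m => gammaStar m ⟨0, hr m⟩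

end BlockGroup

variable [hp : Fact p.Prime]

theorem pow_smul_ne_zero_of_addOrderOf_eq {A : Type*} [AddMonoid A] {a : A} {s : ℕ}
    (ha : addOrderOf a = p ^ (s + 1)) : p ^ s • a ≠ 0 :=
  nsmul_ne_zero_of_lt_addOrderOf (pow_ne_zero _ hp.out.ne_zero)
    (ha ▸ Nat.pow_lt_pow_right hp.out.one_lt s.lt_succ_self)

theorem pow_pred_smul_eq_zero_of_addOrderOf_ne {A : Type*} [AddMonoid A] {a : A} {e : ℕ}
    (ha : p ^ e • a = 0) (hne : addOrderOf a ≠ p ^ e) : p ^ (e - 1) • a = 0 := by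
  obtain ⟨j, hj, hja⟩ := (Nat.dvd_prime_pow hp.out).mp (addOrderOf_dvd_of_nsmul_eq_zero ha)
  have hje : j ≤ e - 1 := by
    rcases hj.lt_or_eq with hlt | rfl
    · omega
    · exact absurd hja hne
  exact addOrderOf_dvd_iff_nsmul_eq_zero.mp (hja ▸ pow_dvd_pow p hje)

theorem addOrderOf_add_eq_pow_succ_iff {A : Type*} [AddCommGroup A] {a b : A} {s : ℕ}
    (hb : p ^ s • b = 0) : addOrderOf (a + b) = p ^ (s + 1) ↔ addOrderOf a = p ^ (s + 1) := by
  have key : ∀ a b : A, p ^ s • b = 0 → addOrderOf a = p ^ (s + 1) →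
      addOrderOf (a + b) = p ^ (s + 1) := fun a b hb ha => by
    refine addOrderOf_eq_prime_pow ?_ ?_
    · rw [smul_add, hb, add_zero]
      exact pow_smul_ne_zero_of_addOrderOf_eq ha
    · have hb' : p ^ (s + 1) • b = 0 := by rw [pow_succ, mul_nsmul, hb, smul_zero]
      rw [smul_add, hb', add_zero, ← ha]
      exact addOrderOf_nsmul_eq_zero a
  refine ⟨fun h => ?_, key a b hb⟩
  simpa using key (a + b) (-b) (by rw [smul_neg, hb, neg_zero]) h

section

variable {N : ℕ}

theorem pow_smul_castHom_eq_zero {s : ℕ} {y : ZMod (p ^ (N + 1))} (hy : p ^ (s + 1) • y = 0) :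
    p ^ s • ZMod.castHom (pow_dvd_pow p N.le_succ) (ZMod (p ^ N)) y = 0 := by
  have hpy : p • p ^ s • y = 0 := by rwa [smul_smul, ← pow_succ']
  rw [ZMod.nsmul_eq_zero_iff_dvd_mul_val] at hpy
  rw [← map_nsmul, ZMod.castHom_apply, ZMod.cast_eq_val, ZMod.natCast_eq_zero_iff]
  exact Nat.dvd_of_mul_dvd_mul_left hp.out.pos (by rwa [← pow_succ'])

theorem pow_smul_natCast_val_eq_zero {e : ℕ} {y : ZMod (p ^ N)} (hy : p ^ (e - 1) • y = 0) :
    p ^ e • (y.val : ZMod (p ^ (N + 1))) = 0 := by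
  rcases e with _ | e
  · simp_all
  rw [ZMod.nsmul_eq_zero_iff_dvd_mul_val] at hy
  rw [nsmul_eq_mul, ← Nat.cast_mul, ZMod.natCast_eq_zero_iff, pow_succ', pow_succ', mul_assoc]
  exact mul_dvd_mul_left p hy

theorem BockEquiv.preservesOrderPow_iff {G : Type*} [AddCommGroup G] {f g : G →+ ZMod (p ^ N)}
    (h : BockEquiv p N G f g) (s : ℕ) : PreservesOrderPow p f s ↔ PreservesOrderPow p g s := by
  obtain ⟨σ, lam, e, he⟩ := h
  rcases s with _ | s
  · exact ⟨fun _ => ⟨0, by simp, by simp⟩, fun _ => ⟨0, by simp, by simp⟩⟩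
  have hlam : IsUnit (PadicInt.toZModPow N (lam : PadicInt p)) := lam.isUnit.map _
  have key : ∀ x : G, addOrderOf x = p ^ (s + 1) →
      (addOrderOf (g x) = p ^ (s + 1) ↔ addOrderOf (f (σ.symm x)) = p ^ (s + 1)) := by
    intro x hx
    rw [he x, addOrderOf_add_eq_pow_succ_iff, addOrderOf_mul_of_isUnit hlam]
    apply pow_smul_castHom_eq_zero
    rw [← map_nsmul, ← hx, addOrderOf_nsmul_eq_zero, map_zero]
  constructor
  · rintro ⟨y, hy, hfy⟩
    have hσy : addOrderOf (σ y) = p ^ (s + 1) := by rwa [AddEquiv.addOrderOf_eq]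
    exact ⟨σ y, hσy, by rwa [key _ hσy, AddEquiv.symm_apply_apply]⟩
  · rintro ⟨x, hx, hgx⟩
    exact ⟨σ.symm x, by rwa [AddEquiv.addOrderOf_eq], (key x hx).mp hgx⟩

theorem bockEquiv_of_forall_eq {G : Type*} [AddCommGroup G] {f g : G →+ ZMod (p ^ N)}
    (σ : G ≃+ G) (e : G →+ ZMod (p ^ (N + 1)))
    (h : ∀ x, g x = f (σ.symm x) + ZMod.castHom (pow_dvd_pow p N.le_succ) (ZMod (p ^ N)) (e x)) :
    BockEquiv p N G f g :=
  ⟨σ, 1, e, by simpa using h⟩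

end

section

variable {s N : ℕ}

theorem addOrderOf_natCast_pow_sub (hs : s ≤ N) :
    addOrderOf ((p ^ (N - s) : ℕ) : ZMod (p ^ N)) = p ^ s := by
  rw [ZMod.addOrderOf_coe _ (pow_ne_zero _ hp.out.ne_zero),
    Nat.gcd_eq_right (pow_dvd_pow p (N.sub_le s)), Nat.pow_div (N.sub_le s) hp.out.pos]
  congr 1
  omega

theorem zmodPowEmbedding_injective (hs : s ≤ N) :
    Function.Injective (zmodPowEmbedding p s N) := by
  rw [injective_iff_map_eq_zero]
  intro c hc
  rw [zmodPowEmbedding, ZMod.homOfNsmul_apply] at hc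
  exact ZMod.eq_zero_of_val_nsmul_eq_zero (addOrderOf_natCast_pow_sub hs) hc

theorem mem_range_zmodPowEmbedding (hs : s ≤ N) {y : ZMod (p ^ N)} (hy : p ^ s • y = 0) :
    y ∈ (zmodPowEmbedding p s N).range := by
  rw [ZMod.nsmul_eq_zero_iff_dvd_mul_val] at hy
  obtain ⟨w, hw⟩ := Nat.dvd_of_mul_dvd_mul_left (pow_pos hp.out.pos s)
    (by rwa [← pow_add, Nat.add_sub_cancel' hs] : p ^ s * p ^ (N - s) ∣ p ^ s * y.val)
  refine ⟨((w : ℤ) : ZMod (p ^ s)), ?_⟩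
  rw [zmodPowEmbedding, ZMod.homOfNsmul_intCast, natCast_zsmul, nsmul_eq_mul, ← Nat.cast_mul,
    mul_comm, ← hw, ZMod.natCast_zmod_val]

end

section BlockGroup

variable {t : ℕ} {n r : Fin t → ℕ} {N : ℕ}

theorem single_single_eq_val_smul_gen (k : Fin t) (i : Fin (r k)) (c : ZMod (p ^ n k)) :
    (Pi.single k (Pi.single i c) : BlockGroup p n r) = c.val • gen k i := by
  rw [gen, ← Pi.single_smul, ← Pi.single_smul, nsmul_eq_mul, mul_one, ZMod.natCast_zmod_val]

theorem BlockGroup.hom_ext {T : Type*} [AddCommGroup T] {f g : BlockGroup p n r →+ T}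
    (h : ∀ k i, f (gen k i) = g (gen k i)) : f = g := by
  refine AddMonoidHom.functions_ext _ f g fun k y => ?_
  have hk : f.comp (AddMonoidHom.single _ k) = g.comp (AddMonoidHom.single _ k) := by
    refine AddMonoidHom.functions_ext _ _ _ fun i c => ?_
    simp only [AddMonoidHom.comp_apply, AddMonoidHom.single_apply, single_single_eq_val_smul_gen,
      map_nsmul, h]
  exact DFunLike.congr_fun hk y

theorem exists_addEquiv_apply_eq {m : Fin t} (d : BlockGroup p n r →+ ZMod (p ^ n m))
    (i₀ i : Fin (r m)) (hd : addOrderOf (d (gen m i)) = p ^ n m) :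
    ∃ σ : BlockGroup p n r ≃+ BlockGroup p n r, ∀ x, σ x m i₀ = d x := by
  classical
  let τ : BlockGroup p n r →+ BlockGroup p n r := AddMonoidHom.mk'
    (fun x => Function.update x m (Function.update (Function.update (x m) i (x m i₀)) i₀ (d x)))
    fun x y => by simp only [Pi.add_apply, map_add, Function.update_add]
  -- `τ x = 0` forces `x` to be a multiple of `gen m i`, on which `d` is injective.
  have hτ : Function.Injective τ := by
    rw [injective_iff_map_eq_zero]
    intro x hx
    have hcoord : ∀ k j, τ x k j = 0 := fun k j => congrFun (congrFun hx k) j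
    have hx_single : x = (x m i).val • gen m i := by
      rw [← single_single_eq_val_smul_gen]
      funext k j
      rcases eq_or_ne k m with rfl | hk
      · rcases eq_or_ne j i with rfl | hji
        · simp
        by_cases hj₀ : j = i₀
        · subst hj₀
          simpa [τ, Function.update_apply, Ne.symm hji] using hcoord k i
        · simpa [τ, Function.update_apply, hji, hj₀] using hcoord k j
      · simpa [τ, hk] using hcoord k j
    have hxi : x m i = 0 := by
      refine ZMod.eq_zero_of_val_nsmul_eq_zero hd ?_
      rw [← map_nsmul, ← hx_single]
      simpa [τ] using hcoord m i₀
    rw [hx_single, hxi, ZMod.val_zero, zero_smul]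
  exact ⟨AddEquiv.ofBijective τ (Finite.injective_iff_bijective.mp hτ), fun x => by simp [τ]⟩

theorem not_preservesGenOrder_of_eq_zero {f : BlockGroup p n r →+ ZMod (p ^ N)} {k : Fin t}
    {i : Fin (r k)} (hn : 0 < n k) (h : f (gen k i) = 0) : ¬PreservesGenOrder f k i := by
  rw [PreservesGenOrder, h, addOrderOf_zero]
  exact (Nat.one_lt_pow hn.ne' hp.out.one_lt).ne

theorem exists_castHom_comp_eq (g : BlockGroup p n r →+ ZMod (p ^ N))
    (hg : ∀ k i, p ^ (n k - 1) • g (gen k i) = 0) :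
    ∃ e : BlockGroup p n r →+ ZMod (p ^ (N + 1)),
      (ZMod.castHom (pow_dvd_pow p N.le_succ) (ZMod (p ^ N))).toAddMonoidHom.comp e = g :=
  ⟨homOfGen (fun k i => ((g (gen k i)).val : ZMod (p ^ (N + 1))))
      fun k i => pow_smul_natCast_val_eq_zero (hg k i),
    BlockGroup.hom_ext fun k i => by simp [homOfGen_gen]⟩

theorem exists_eq_fullPart_add (f : BlockGroup p n r →+ ZMod (p ^ N)) :
    ∃ e : BlockGroup p n r →+ ZMod (p ^ (N + 1)), ∀ x,
      f x = fullPart f x + ZMod.castHom (pow_dvd_pow p N.le_succ) (ZMod (p ^ N)) (e x) := by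
  obtain ⟨e, he⟩ := exists_castHom_comp_eq (f - fullPart f) fun k i => by
    by_cases h : PreservesGenOrder f k i
    · simp [fullPart, restrictCoords_gen, h]
    · simpa [fullPart, restrictCoords_gen, h] using
        pow_pred_smul_eq_zero_of_addOrderOf_ne (pow_smul_map_gen f k i) h
  exact ⟨e, fun x => by simpa [sub_eq_iff_eq_add'] using (DFunLike.congr_fun he x).symm⟩

theorem bockEquiv_fullPart (f : BlockGroup p n r →+ ZMod (p ^ N)) :
    BockEquiv p N (BlockGroup p n r) (fullPart f) f := by
  obtain ⟨e, he⟩ := exists_eq_fullPart_add f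
  exact bockEquiv_of_forall_eq (AddEquiv.refl _) e he

theorem exists_preservesGenOrder_le (f : BlockGroup p n r →+ ZMod (p ^ N)) {s : ℕ}
    (hs : 1 ≤ s) (h : PreservesOrderPow p f s) :
    ∃ k i, PreservesGenOrder f k i ∧ s ≤ n k := by
  by_contra! hlt
  obtain ⟨x, -, hx⟩ := ((bockEquiv_fullPart f).preservesOrderPow_iff s).mpr h
  obtain ⟨s, rfl⟩ := Nat.exists_eq_add_of_le' hs
  apply pow_smul_ne_zero_of_addOrderOf_eq hx
  rw [fullPart, AddMonoidHom.comp_apply, ← map_nsmul,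
    pow_smul_restrictCoords_eq_zero (fun k i hki => Nat.le_of_lt_succ (hlt k i hki)), map_zero]

open Classical in
theorem topBlock_eq_max_preservesOrderPow (hmono : StrictMono n) (hn : ∀ j, 0 < n j)
    (f : BlockGroup p n r →+ ZMod (p ^ N)) :
    topBlock f = (univ.filter fun j => PreservesOrderPow p f (n j)).max := by
  refine le_antisymm (Finset.max_mono fun k hk => ?_) (Finset.max_le fun j hj => ?_)
  · obtain ⟨i, hi⟩ := (mem_filter.mp hk).2
    exact mem_filter.mpr ⟨mem_univ _, gen k i, addOrderOf_gen k i, hi⟩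
  · obtain ⟨k, i, hki, hjk⟩ := exists_preservesGenOrder_le f (hn j) (mem_filter.mp hj).2
    exact (WithBot.coe_le_coe.mpr (hmono.le_iff_le.mp hjk)).trans (le_topBlock hki)

theorem BockEquiv.topBlock_eq (hmono : StrictMono n) (hn : ∀ j, 0 < n j)
    {f g : BlockGroup p n r →+ ZMod (p ^ N)} (h : BockEquiv p N (BlockGroup p n r) f g) :
    topBlock f = topBlock g := by
  classical
  rw [topBlock_eq_max_preservesOrderPow hmono hn, topBlock_eq_max_preservesOrderPow hmono hn,
    Finset.filter_congr fun j _ => h.preservesOrderPow_iff (n j)]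

theorem topBlock_zero (hn : ∀ j, 0 < n j) :
    topBlock (0 : BlockGroup p n r →+ ZMod (p ^ N)) = ⊥ := by
  classical
  refine Finset.max_eq_bot.mpr (filter_eq_empty_iff.mpr fun k _ ⟨i, hi⟩ => ?_)
  exact not_preservesGenOrder_of_eq_zero (hn k) rfl hi

theorem topBlock_gammaStar (hn : ∀ j, 0 < n j) {m : Fin t} (hm : n m ≤ N) (i₀ : Fin (r m)) :
    topBlock (gammaStar m i₀ : BlockGroup p n r →+ ZMod (p ^ N)) = m := by
  classical
  rw [topBlock]
  convert Finset.max_singleton (a := m)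
  ext k
  simp only [mem_filter, mem_univ, true_and, mem_singleton]
  constructor
  · rintro ⟨i, hi⟩
    by_contra hk
    refine not_preservesGenOrder_of_eq_zero (hn k) ?_ hi
    simp [gammaStar, gen, Pi.single_eq_of_ne' hk]
  · rintro rfl
    refine ⟨i₀, ?_⟩
    simp only [PreservesGenOrder, gammaStar, gen, AddMonoidHom.comp_apply,
      Pi.evalAddMonoidHom_apply, Pi.single_eq_same]
    rw [addOrderOf_injective _ (zmodPowEmbedding_injective hm), ZMod.addOrderOf_one]

theorem topBlock_classRep (hn : ∀ j, 0 < n j) (hN : ∀ j, n j ≤ N) (hr : ∀ j, 0 < r j)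
    (o : WithBot (Fin t)) :
    topBlock (classRep hr o : BlockGroup p n r →+ ZMod (p ^ N)) = o := by
  cases o using WithBot.recBotCoe with
  | bot => exact topBlock_zero hn
  | coe m => exact topBlock_gammaStar hn (hN m) _

theorem exists_fullPart_eq_classRep_comp (hmono : StrictMono n) (hN : ∀ j, n j ≤ N)
    (hr : ∀ j, 0 < r j) (f : BlockGroup p n r →+ ZMod (p ^ N)) :
    ∃ σ : BlockGroup p n r ≃+ BlockGroup p n r,
      ∀ x, fullPart f x = classRep hr (topBlock f) (σ x) := by
  cases hm : topBlock f using WithBot.recBotCoe with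
  | bot =>
    refine ⟨AddEquiv.refl _, fun x => ?_⟩
    have hnone : ∀ k i, ¬PreservesGenOrder f k i := fun k i h =>
      WithBot.not_coe_le_bot _ (hm ▸ le_topBlock h)
    have hx : restrictCoords (PreservesGenOrder f) x = 0 := by
      funext k i
      simp [restrictCoords, hnone]
    simp [classRep, fullPart, hx]
  | coe m =>
    obtain ⟨i, hi⟩ := exists_preservesGenOrder_of_topBlock_eq hm
    have hle : ∀ k i, PreservesGenOrder f k i → n k ≤ n m := fun k i h =>
      hmono.monotone (WithBot.coe_le_coe.mp (hm ▸ le_topBlock h))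
    have hι := zmodPowEmbedding_injective (p := p) (hN m)
    obtain ⟨d, hd⟩ := AddMonoidHom.exists_comp_eq_of_forall_mem_range hι (fullPart f) fun x =>
      mem_range_zmodPowEmbedding (hN m) (by
        rw [fullPart, AddMonoidHom.comp_apply, ← map_nsmul, pow_smul_restrictCoords_eq_zero hle,
          map_zero])
    have hdi : addOrderOf (d (gen m i)) = p ^ n m := by
      rw [← addOrderOf_injective _ hι, ← AddMonoidHom.comp_apply, hd, fullPart,
        AddMonoidHom.comp_apply, restrictCoords_gen, if_pos hi]
      exact hi
    obtain ⟨σ, hσ⟩ := exists_addEquiv_apply_eq d ⟨0, hr m⟩ i hdi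
    refine ⟨σ, fun x => ?_⟩
    rw [← hd]
    simp [classRep, gammaStar, hσ]

theorem quot_mk_eq_classRep_topBlock (hmono : StrictMono n) (hN : ∀ j, n j ≤ N)
    (hr : ∀ j, 0 < r j) (f : BlockGroup p n r →+ ZMod (p ^ N)) :
    Quot.mk (BockEquiv p N (BlockGroup p n r)) f = Quot.mk _ (classRep hr (topBlock f)) := by
  obtain ⟨σ, hσ⟩ := exists_fullPart_eq_classRep_comp hmono hN hr f
  refine (Quot.sound (bockEquiv_fullPart f)).symm.trans (Quot.sound ?_).symm
  exact bockEquiv_of_forall_eq σ.symm 0 fun x => by simp [hσ]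

end BlockGroup

theorem stmt11_general (p : ℕ) [Fact p.Prime]
    (t : ℕ) (n : Fin t → ℕ) (hmono : StrictMono n) (hn : ∀ j, 0 < n j)
    (r : Fin t → ℕ) (hr : ∀ j, 0 < r j)
    (N : ℕ) (hN : ∀ j, n j ≤ N) :
    Nat.card
        (Quot (BockEquiv p N (∀ j : Fin t, Fin (r j) → ZMod (p ^ n j))))
      = t + 1 := by
  let E : Quot (BockEquiv p N (BlockGroup p n r)) ≃ WithBot (Fin t) :=
    { toFun := Quot.lift topBlock fun _ _ h => h.topBlock_eq hmono hn
      invFun := fun o => Quot.mk _ (classRep hr o)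
      left_inv := Quot.ind fun f => (quot_mk_eq_classRep_topBlock hmono hN hr f).symm
      right_inv := topBlock_classRep hn hN hr }
  rw [Nat.card_congr (E.trans (finSuccEquiv t).symm), Nat.card_eq_fintype_card,
    Fintype.card_fin]

/-- For `G = ⊕_{j=1}^t (Z/p^{n_j})^{r_j}` with `n₁ < n₂ < ⋯ < n_t = N` and `p` an odd
prime, `Ĝ = Hom(G, C/p^N C)` has exactly `t + 1` Bockquivalence classes. -/
theorem stmt11 (p : ℕ) [Fact p.Prime] (hodd : Odd p)
    (t : ℕ) (ht : 0 < t) (n : Fin t → ℕ) (hmono : StrictMono n) (hn : ∀ j, 0 < n j)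
    (r : Fin t → ℕ) (hr : ∀ j, 0 < r j)
    (N : ℕ) (hN : ∀ j, n j ≤ N) (hNmax : ∃ j, n j = N) :
    Nat.card
        (Quot (BockEquiv p N (∀ j : Fin t, Fin (r j) → ZMod (p ^ n j))))
      = t + 1 :=
  stmt11_general p t n hmono hn r hr N hN
end

section
/- Let G be a finite abelian p-group whose exponent is p^n, assume G is a free Z/p^n-module (i.e., homocyclic), and let C be cyclic of order p^{n+1}. Then Ĝ = Hom(G, C/p^n C) has exactly two Bockquivalence classes: the image of π_B, and the set of surjective homomorphisms G → C/p^n C. -/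
/-! A homomorphism `c : (ℤ/pⁿ)ʳ → ℤ/pⁿ` is either surjective, which happens exactly when some
`c eᵢ` is a unit, or takes all its values in `p·ℤ/pⁿ`; in the latter case `c = p·c'`, and `c` lifts
through `ℤ/pⁿ⁺¹ → ℤ/pⁿ` as `x ↦ p·c' x`. Since `G` is killed by `pⁿ`, every element of `im π_B`
takes values in `p·ℤ/pⁿ`, so Bockquivalence preserves this dichotomy. Conversely, two lifts differ
by an element of `im π_B`, and two surjective homomorphisms differ by an automorphism: when `c eᵢ`
is a unit, overwriting the `i`-th coordinate of `x` by `c x` is an automorphism, and a transposition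
of coordinates matches the pivots of `c` and `d`. -/

namespace ZMod

theorem natCast_dvd_of_dvd_val {N k : ℕ} [NeZero N] {a : ZMod N} (h : k ∣ a.val) :
    (k : ZMod N) ∣ a := by
  simpa using Nat.cast_dvd_cast (α := ZMod N) h

variable {p n : ℕ} [Fact p.Prime]

theorem isUnit_iff_not_natCast_dvd (hn : n ≠ 0) (a : ZMod (p ^ n)) :
    IsUnit a ↔ ¬ (p : ZMod (p ^ n)) ∣ a := by
  have hp : ¬ IsUnit (p : ZMod (p ^ n)) := by
    rw [isUnit_prime_iff_not_dvd Fact.out, not_not]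
    exact dvd_pow_self p hn
  refine ⟨fun ha hpa => hp (isUnit_of_dvd_unit hpa ha), fun hpa => ?_⟩
  rw [← natCast_zmod_val a, isUnit_iff_coprime, Nat.coprime_pow_right_iff (Nat.pos_of_ne_zero hn),
    Nat.coprime_comm, Nat.Prime.coprime_iff_not_dvd Fact.out]
  exact fun h => hpa (natCast_dvd_of_dvd_val h)

theorem natCast_dvd_of_pow_nsmul_eq_zero {a : ZMod (p ^ (n + 1))} (h : p ^ n • a = 0) :
    (p : ZMod (p ^ (n + 1))) ∣ a := by
  rw [← natCast_zmod_val a, nsmul_eq_mul, ← Nat.cast_mul, natCast_eq_zero_iff] at h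
  exact natCast_dvd_of_dvd_val
    (Nat.dvd_of_mul_dvd_mul_left (Nat.pos_of_neZero _) (by rwa [← pow_succ]))

def mulNatHom {m N : ℕ} (k : ℕ) (h : N ∣ k * m) : ZMod m →+ ZMod N :=
  ZMod.lift m ⟨zmultiplesHom _ (k : ZMod N), by
    simpa [mul_comm] using (natCast_eq_zero_iff (k * m) N).2 h⟩

theorem castHom_mulNatHom {m N k : ℕ} (h : N ∣ k * m) (hmN : m ∣ N) (x : ZMod m) :
    castHom hmN (ZMod m) (mulNatHom k h x) = k * x := by
  obtain ⟨z, rfl⟩ := intCast_surjective x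
  simp [mulNatHom, mul_comm, -castHom_apply]

end ZMod

namespace AddMonoidHom

variable {m : ℕ} {ι : Type*} [DecidableEq ι]

theorem surjective_of_isUnit_apply [NeZero m] {M : Type*} [AddMonoid M] (c : M →+ ZMod m)
    {x : M} (h : IsUnit (c x)) : Function.Surjective c := fun z =>
  ⟨(z * h.unit⁻¹).val • x, by
    rw [map_nsmul, nsmul_eq_mul, ZMod.natCast_zmod_val, mul_assoc, h.val_inv_mul, mul_one]⟩

def updateCoord (c : (ι → ZMod m) →+ ZMod m) (i : ι) : (ι → ZMod m) →+ (ι → ZMod m) :=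
  AddMonoidHom.mk' (fun x => Function.update x i (c x)) fun x y => by
    ext j
    rcases eq_or_ne j i with rfl | hj <;> simp [Function.update_of_ne, *]

variable [Fintype ι]

theorem apply_eq_dotProduct (c : (ι → ZMod m) →+ ZMod m) (x : ι → ZMod m) :
    c x = x ⬝ᵥ fun i => c (Pi.single i 1) := by
  conv_lhs => rw [pi_eq_sum_univ' x]
  simp [ZMod.map_smul, dotProduct]

theorem apply_single (c : (ι → ZMod m) →+ ZMod m) (i : ι) (a : ZMod m) :
    c (Pi.single i a) = a * c (Pi.single i 1) := by
  rw [apply_eq_dotProduct, single_dotProduct]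

theorem exists_eq_mul_of_forall_dvd (c : (ι → ZMod m) →+ ZMod m) {a : ZMod m}
    (h : ∀ x, a ∣ c x) : ∃ c' : (ι → ZMod m) →+ ZMod m, ∀ x, c x = a * c' x := by
  choose y hy using fun i => h (Pi.single i 1)
  refine ⟨AddMonoidHom.mk' (· ⬝ᵥ y) fun u v => add_dotProduct u v y, fun x => ?_⟩
  rw [c.apply_eq_dotProduct, funext hy]
  exact dotProduct_smul a x y

theorem updateCoord_bijective [NeZero m] (c : (ι → ZMod m) →+ ZMod m) {i : ι}
    (hi : IsUnit (c (Pi.single i 1))) : Function.Bijective (updateCoord c i) := by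
  have hinj : Function.Injective (updateCoord c i) := by
    refine (injective_iff_map_eq_zero _).2 fun x hx => ?_
    have hx_ne : ∀ k ≠ i, x k = 0 := fun k hk => by
      simpa [updateCoord, Function.update_of_ne hk] using congr_fun hx k
    have hx_single : x = Pi.single i (x i) := by
      ext k
      rcases eq_or_ne k i with rfl | hk
      · simp
      · simp [hk, hx_ne k hk]
    have hcx : c x = 0 := by simpa [updateCoord] using congr_fun hx i
    rw [hx_single, apply_single, hi.mul_left_eq_zero] at hcx
    rw [hx_single, hcx, Pi.single_zero]
  exact ⟨hinj, Finite.injective_iff_surjective.1 hinj⟩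

theorem exists_addEquiv_apply_eq [NeZero m] {c d : (ι → ZMod m) →+ ZMod m} {i j : ι}
    (hc : IsUnit (c (Pi.single i 1))) (hd : IsUnit (d (Pi.single j 1))) :
    ∃ σ : (ι → ZMod m) ≃+ (ι → ZMod m), ∀ x, c (σ x) = d x := by
  let Tc := AddEquiv.ofBijective _ (updateCoord_bijective c hc)
  let Td := AddEquiv.ofBijective _ (updateCoord_bijective d hd)
  let S := (LinearEquiv.funCongrLeft ℕ (ZMod m) (Equiv.swap i j)).toAddEquiv
  have hTd : ∀ x, Td x j = d x := fun x =>
    show Function.update x j (d x) j = d x from Function.update_self ..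
  have hTc : ∀ y, c (Tc.symm y) = y i := fun y => by
    have h := show Tc (Tc.symm y) i = c (Tc.symm y) from Function.update_self ..
    rwa [Tc.apply_symm_apply, eq_comm] at h
  -- `Td` puts `d x` in coordinate `j`, `S` moves it to coordinate `i`, and `c ∘ Tc⁻¹` reads it there.
  refine ⟨Td.trans (S.trans Tc.symm), fun x => ?_⟩
  simp [hTc, hTd, S, LinearMap.funLeft_apply]

theorem exists_castHom_comp_eq_of_forall_dvd {p n : ℕ} {c : (ι → ZMod (p ^ n)) →+ ZMod (p ^ n)}
    (h : ∀ x, (p : ZMod (p ^ n)) ∣ c x) :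
    ∃ f : (ι → ZMod (p ^ n)) →+ ZMod (p ^ (n + 1)),
      (ZMod.castHom (pow_dvd_pow p (Nat.le_succ n)) (ZMod (p ^ n))).toAddMonoidHom.comp f = c := by
  obtain ⟨c', hc'⟩ := c.exists_eq_mul_of_forall_dvd h
  refine ⟨(ZMod.mulNatHom p (pow_succ' p n).dvd).comp c', ext fun x => ?_⟩
  exact (ZMod.castHom_mulNatHom (pow_succ' p n).dvd (pow_dvd_pow p (Nat.le_succ n)) _).trans
    (hc' x).symm

section PrimePower

variable {p n : ℕ} [Fact p.Prime]

theorem not_surjective_iff_forall_dvd {M : Type*} [AddMonoid M] (hn : n ≠ 0)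
    (c : M →+ ZMod (p ^ n)) : ¬ Function.Surjective c ↔ ∀ x, (p : ZMod (p ^ n)) ∣ c x := by
  refine ⟨fun hc x => ?_, fun h hc => ?_⟩
  · by_contra hx
    exact hc (c.surjective_of_isUnit_apply ((ZMod.isUnit_iff_not_natCast_dvd hn _).2 hx))
  · obtain ⟨x, hx⟩ := hc 1
    exact (ZMod.isUnit_iff_not_natCast_dvd hn _).1 (hx ▸ isUnit_one) (h x)

theorem exists_isUnit_apply_single (hn : n ≠ 0) {c : (ι → ZMod (p ^ n)) →+ ZMod (p ^ n)}
    (hc : Function.Surjective c) : ∃ i, IsUnit (c (Pi.single i 1)) := by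
  by_contra! h
  refine (c.not_surjective_iff_forall_dvd hn).2 (fun x => ?_) hc
  rw [c.apply_eq_dotProduct]
  exact Finset.dvd_sum fun i _ =>
    dvd_mul_of_dvd_right (not_not.1 ((ZMod.isUnit_iff_not_natCast_dvd hn _).not.1 (h i))) _

theorem exists_addEquiv_apply_eq_of_surjective (hn : n ≠ 0)
    {c d : (ι → ZMod (p ^ n)) →+ ZMod (p ^ n)} (hc : Function.Surjective c)
    (hd : Function.Surjective d) : ∃ σ : (ι → ZMod (p ^ n)) ≃+ (ι → ZMod (p ^ n)),
      ∀ x, c (σ x) = d x := by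
  obtain ⟨i, hi⟩ := exists_isUnit_apply_single hn hc
  obtain ⟨j, hj⟩ := exists_isUnit_apply_single hn hd
  exact exists_addEquiv_apply_eq hi hj

end PrimePower

end AddMonoidHom

section BockEquiv

variable {p n : ℕ} [Fact p.Prime] {G : Type*} [AddCommGroup G]

theorem BockEquiv.forall_dvd_iff (hG : ∀ x : G, p ^ n • x = 0) {c d : G →+ ZMod (p ^ n)}
    (h : BockEquiv p n G c d) :
    (∀ x, (p : ZMod (p ^ n)) ∣ c x) ↔ ∀ x, (p : ZMod (p ^ n)) ∣ d x := by
  obtain ⟨σ, lam, e, he⟩ := h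
  have hε : ∀ x, (p : ZMod (p ^ n)) ∣ ZMod.castHom (pow_dvd_pow p (Nat.le_succ n)) _ (e x) :=
    fun x => by
      simpa using map_dvd (ZMod.castHom (pow_dvd_pow p (Nat.le_succ n)) (ZMod (p ^ n)))
        (ZMod.natCast_dvd_of_pow_nsmul_eq_zero (by rw [← map_nsmul, hG, map_zero]))
  have hlam : IsUnit (PadicInt.toZModPow n (lam : ℤ_[p])) := lam.isUnit.map _
  have key : ∀ x, (p : ZMod (p ^ n)) ∣ d x ↔ (p : ZMod (p ^ n)) ∣ c (σ.symm x) := fun x => by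
    rw [he, dvd_add_left (hε x), hlam.dvd_mul_left]
  rw [forall_congr' key]
  exact σ.symm.surjective.forall

theorem BockEquiv.surjective_iff (hn : n ≠ 0) (hG : ∀ x : G, p ^ n • x = 0)
    {c d : G →+ ZMod (p ^ n)} (h : BockEquiv p n G c d) :
    Function.Surjective c ↔ Function.Surjective d := by
  rw [← not_iff_not, c.not_surjective_iff_forall_dvd hn, d.not_surjective_iff_forall_dvd hn,
    h.forall_dvd_iff hG]

theorem bockEquiv_castHom_comp (fc fd : G →+ ZMod (p ^ (n + 1))) :
    BockEquiv p n G
      ((ZMod.castHom (pow_dvd_pow p (Nat.le_succ n)) (ZMod (p ^ n))).toAddMonoidHom.comp fc)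
      ((ZMod.castHom (pow_dvd_pow p (Nat.le_succ n)) (ZMod (p ^ n))).toAddMonoidHom.comp fd) :=
  ⟨AddEquiv.refl G, 1, fd - fc, fun x => by simp [-ZMod.castHom_apply]⟩

theorem bockEquiv_of_apply_eq {c d : G →+ ZMod (p ^ n)} (σ : G ≃+ G) (h : ∀ x, c (σ x) = d x) :
    BockEquiv p n G c d :=
  ⟨σ.symm, 1, 0, fun x => by simp [h]⟩

end BockEquiv

theorem stmt13_general (p : ℕ) [Fact p.Prime] (n r : ℕ) (hn : 0 < n) :
    ∀ c d : (Fin r → ZMod (p ^ n)) →+ ZMod (p ^ n),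
      BockEquiv p n (Fin r → ZMod (p ^ n)) c d ↔
        (((∃ f : (Fin r → ZMod (p ^ n)) →+ ZMod (p ^ (n + 1)),
              (ZMod.castHom (pow_dvd_pow p (Nat.le_succ n))
                (ZMod (p ^ n))).toAddMonoidHom.comp f = c) ∧
            (∃ f : (Fin r → ZMod (p ^ n)) →+ ZMod (p ^ (n + 1)),
              (ZMod.castHom (pow_dvd_pow p (Nat.le_succ n))
                (ZMod (p ^ n))).toAddMonoidHom.comp f = d))
          ∨ (Function.Surjective ⇑c ∧ Function.Surjective ⇑d)) := by
  intro c d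
  have hG : ∀ x : Fin r → ZMod (p ^ n), p ^ n • x = 0 := fun x => by ext; simp [nsmul_eq_mul]
  constructor
  · intro h
    by_cases hc : Function.Surjective c
    · exact Or.inr ⟨hc, (h.surjective_iff hn.ne' hG).1 hc⟩
    · have hd := mt (h.surjective_iff hn.ne' hG).2 hc
      rw [AddMonoidHom.not_surjective_iff_forall_dvd hn.ne'] at hc hd
      exact Or.inl ⟨AddMonoidHom.exists_castHom_comp_eq_of_forall_dvd hc,
        AddMonoidHom.exists_castHom_comp_eq_of_forall_dvd hd⟩
  · rintro (⟨⟨fc, rfl⟩, ⟨fd, rfl⟩⟩ | ⟨hc, hd⟩)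
    · exact bockEquiv_castHom_comp fc fd
    · obtain ⟨σ, hσ⟩ := AddMonoidHom.exists_addEquiv_apply_eq_of_surjective hn.ne' hc hd
      exact bockEquiv_of_apply_eq σ hσ

/-- If `G` is homocyclic of exponent `p^n` (a free `Z/pⁿ`-module of rank `r ≥ 1`),
then `Ĝ = Hom(G, C/pⁿC)` has exactly two Bockquivalence classes: the image of `π_B`
and the set of surjective homomorphisms `G → C/pⁿC`. -/
theorem stmt13 (p : ℕ) [Fact p.Prime] (n r : ℕ) (hn : 0 < n) (hr : 0 < r)
    (hp2 : p ≠ 2 ∨ 1 < n) :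
    ∀ c d : (Fin r → ZMod (p ^ n)) →+ ZMod (p ^ n),
      BockEquiv p n (Fin r → ZMod (p ^ n)) c d ↔
        (((∃ f : (Fin r → ZMod (p ^ n)) →+ ZMod (p ^ (n + 1)),
              (ZMod.castHom (pow_dvd_pow p (Nat.le_succ n))
                (ZMod (p ^ n))).toAddMonoidHom.comp f = c) ∧
            (∃ f : (Fin r → ZMod (p ^ n)) →+ ZMod (p ^ (n + 1)),
              (ZMod.castHom (pow_dvd_pow p (Nat.le_succ n))
                (ZMod (p ^ n))).toAddMonoidHom.comp f = d))
          ∨ (Function.Surjective ⇑c ∧ Function.Surjective ⇑d)) :=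
  stmt13_general p n r hn
end

section
/- Let p be an odd prime and G a finite abelian p-group in which exactly t distinct orders occur among its cyclic invariant factors. Then the number of orbits of the action of Aut(G) × F_p^* on the subgroup of H^2(G; F_p) parametrizing abelian extensions (i.e., Ext^1_{Z_p G}(G, F_p)) is exactly t + 1. -/
/-- The 2-cocycle condition for a function `c : G → G → R` (trivial action). -/
def IsCocycle {G R : Type*} [AddCommGroup G] [AddCommGroup R] (c : G → G → R) : Prop :=
  ∀ x y z : G, c y z - c (x + y) z + c x (y + z) - c x y = 0

/-- `c` is a 2-coboundary: `c = ∂f` for some `f : G → R`. -/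
def IsCoboundary {G R : Type*} [AddCommGroup G] [AddCommGroup R] (c : G → G → R) : Prop :=
  ∃ f : G → R, ∀ x y : G, c x y = f y - f (x + y) + f x

/-- The orbit relation of `A = Aut(G) × F_p^*` on classes of symmetric 2-cocycles,
i.e. on `Ext¹(G, F_p) = H²_ab(G; F_p)`. -/
def SymOrbitRel (p : ℕ) (G : Type*) [AddCommGroup G]
    (c d : {c : G → G → ZMod p // IsCocycle c ∧ ∀ x y : G, c x y = c y x}) : Prop :=
  ∃ (σ : G ≃+ G) (lam : (ZMod p)ˣ) (f : G → ZMod p),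
    ∀ x y : G,
      d.1 x y = (lam : ZMod p) * c.1 (σ.symm x) (σ.symm y) + (f y - f (x + y) + f x)

namespace Stmt15

variable {p : ℕ}

section Basic
variable {G : Type*} [AddCommGroup G]

theorem cocycle_zero_right {c : G → G → ZMod p} (hc : IsCocycle c) (x : G) :
    c x 0 = c 0 0 := by
  have h := hc x 0 0
  simp only [add_zero, zero_add] at h
  linear_combination -h

theorem cocycle_zero_left {c : G → G → ZMod p} (hc : IsCocycle c) (x : G) :
    c 0 x = c 0 0 := by
  have h := hc 0 0 x
  simp only [add_zero, zero_add] at h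
  linear_combination h

theorem isCocycle_pullback {H : Type*} [AddCommGroup H] {c : G → G → ZMod p}
    (hc : IsCocycle c) (φ : H →+ G) : IsCocycle (fun x y => c (φ x) (φ y)) := by
  intro x y z
  simp only [map_add]
  exact hc (φ x) (φ y) (φ z)

theorem isCocycle_smul {c : G → G → ZMod p} (hc : IsCocycle c) (a : ZMod p) :
    IsCocycle (fun x y => a * c x y) := by
  intro x y z
  have := hc x y z
  ring_nf
  linear_combination a * this

theorem isCocycle_sum {ι : Type*} (s : Finset ι) (c : ι → G → G → ZMod p)
    (hc : ∀ i ∈ s, IsCocycle (c i)) : IsCocycle (fun x y => ∑ i ∈ s, c i x y) := by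
  intro x y z
  rw [← Finset.sum_sub_distrib, ← Finset.sum_add_distrib, ← Finset.sum_sub_distrib]
  exact Finset.sum_eq_zero fun i hi => hc i hi x y z

/-- `Sv c N x` : the "partial transgression" `∑_{i<N} (c x (i•x) - c 0 0)`. -/
def Sv (c : G → G → ZMod p) (N : ℕ) (x : G) : ZMod p :=
  ∑ i ∈ Finset.range N, (c x (i • x) - c 0 0)

theorem Sv_rel {c d : G → G → ZMod p} {σ : G ≃+ G} {lam : ZMod p} {f : G → ZMod p}
    (h : ∀ x y, d x y = lam * c (σ.symm x) (σ.symm y) + (f y - f (x + y) + f x))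
    {N : ℕ} {x : G} (hx : N • x = 0) (hN : (N : ZMod p) = 0) :
    Sv d N x = lam * Sv c N (σ.symm x) := by
  have key : ∀ i : ℕ, d x (i • x) - d 0 0 =
      lam * (c (σ.symm x) (i • σ.symm x) - c 0 0)
        + ((f (i • x) - f ((i+1) • x)) + (f x - f 0)) := by
    intro i
    have h1 := h x (i • x)
    have h2 := h 0 0
    rw [map_nsmul] at h1
    have hxx : x + i • x = (i + 1) • x := by
      rw [add_nsmul, one_nsmul, add_comm]
    rw [hxx] at h1
    simp only [add_zero, map_zero] at h2
    rw [h1, h2]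
    ring
  unfold Sv
  simp only [key]
  rw [Finset.sum_add_distrib, Finset.sum_add_distrib, ← Finset.mul_sum,
    Finset.sum_range_sub' (fun i => f (i • x)), Finset.sum_const]
  rw [zero_smul, hx, Finset.card_range]
  have h0 : N • (f x - f 0) = (0 : ZMod p) := by
    rw [nsmul_eq_mul, hN, zero_mul]
  rw [h0]
  ring

theorem Sv_pullback {H : Type*} [AddCommGroup H] (c : G → G → ZMod p) (φ : H →+ G)
    (N : ℕ) (x : H) : Sv (fun x y => c (φ x) (φ y)) N x = Sv c N (φ x) := by
  unfold Sv
  refine Finset.sum_congr rfl fun i _ => ?_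
  simp only [map_nsmul, map_zero]

end Basic

/-- carry cocycle on `ZMod M` with values in `ZMod p`. -/
def carryC (p M : ℕ) (a b : ZMod M) : ZMod p := ((a.val + b.val) / M : ℕ)

theorem nat_carry_div {M : ℕ} (hM : 0 < M) (a u : ℕ) (hu : u < M) :
    (a + u) / M = a / M + (a % M + u) / M := by
  conv_lhs => rw [← Nat.div_add_mod a M]
  rw [add_assoc, Nat.mul_add_div hM]

theorem carryC_cocycle {M : ℕ} (hM : 0 < M) : IsCocycle (carryC p M) := by
  haveI : NeZero M := ⟨hM.ne'⟩
  intro x y z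
  unfold carryC
  have hkey : (y.val + z.val) / M + (x.val + (y + z).val) / M
      = (x.val + y.val) / M + ((x + y).val + z.val) / M := by
    rw [ZMod.val_add y z, ZMod.val_add x y]
    have h1 := nat_carry_div hM (y.val + z.val) x.val (ZMod.val_lt x)
    have h2 := nat_carry_div hM (x.val + y.val) z.val (ZMod.val_lt z)
    have e1 : y.val + z.val + x.val = x.val + y.val + z.val := by ring
    rw [e1] at h1
    rw [add_comm x.val ((y.val + z.val) % M)]
    omega
  have := congrArg (fun m : ℕ => (m : ZMod p)) hkey
  push_cast at this
  linear_combination this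

theorem carryC_symm (M : ℕ) (a b : ZMod M) : carryC p M a b = carryC p M b a := by
  unfold carryC; rw [add_comm]

theorem carryC_zero_zero {M : ℕ} (hM : 0 < M) : carryC p M 0 0 = 0 := by
  haveI : NeZero M := ⟨hM.ne'⟩
  unfold carryC
  simp

theorem val_nsmul {M : ℕ} (hM : 0 < M) (i : ℕ) (x : ZMod M) :
    (i • x).val = i * x.val % M := by
  haveI : NeZero M := ⟨hM.ne'⟩
  have : i • x = ((i * x.val : ℕ) : ZMod M) := by
    push_cast
    rw [ZMod.natCast_rightInverse x, nsmul_eq_mul]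
  rw [this, ZMod.val_natCast]

theorem Sv_carry {M : ℕ} (hM : 0 < M) (N : ℕ) (u : ZMod M) :
    Sv (carryC p M) N u = ((N * u.val / M : ℕ) : ZMod p) := by
  haveI : NeZero M := ⟨hM.ne'⟩
  have key : ∀ N : ℕ, (∑ i ∈ Finset.range N, ((u.val + (i • u).val) / M)) = N * u.val / M := by
    intro N
    induction N with
    | zero => simp
    | succ N ih =>
      rw [Finset.sum_range_succ, ih, val_nsmul hM, add_comm u.val]
      have h1 := nat_carry_div hM (N * u.val) u.val (ZMod.val_lt u)
      have h2 : (N + 1) * u.val = N * u.val + u.val := by ring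
      rw [h2, h1]
  unfold Sv
  rw [show carryC p M 0 0 = (0 : ZMod p) from carryC_zero_zero hM]
  simp only [sub_zero]
  unfold carryC
  rw [← Nat.cast_sum, key]

section NF
variable {I : Type*} [Fintype I] {M : I → ℕ}

/-- normal-form symmetric cocycle attached to a vector `v`. -/
def NF (p : ℕ) (M : I → ℕ) (v : I → ZMod p) (x y : ∀ i, ZMod (M i)) : ZMod p :=
  ∑ i, v i * carryC p (M i) (x i) (y i)

theorem NF_cocycle (hM : ∀ i, 0 < M i) (v : I → ZMod p) : IsCocycle (NF p M v) := by
  refine isCocycle_sum _ _ fun i _ => ?_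
  have h1 : IsCocycle (fun x y : (∀ i, ZMod (M i)) => carryC p (M i) (x i) (y i)) :=
    isCocycle_pullback (p := p) (carryC_cocycle (hM i)) (Pi.evalAddMonoidHom (fun i => ZMod (M i)) i)
  exact isCocycle_smul h1 (v i)

theorem NF_symm (v : I → ZMod p) (x y : ∀ i, ZMod (M i)) :
    NF p M v x y = NF p M v y x := by
  unfold NF
  exact Finset.sum_congr rfl fun i _ => by rw [carryC_symm]

theorem Sv_NF (hM : ∀ i, 0 < M i) (v : I → ZMod p) (N : ℕ) (x : ∀ i, ZMod (M i)) :
    Sv (NF p M v) N x = ∑ i, v i * ((N * (x i).val / (M i) : ℕ) : ZMod p) := by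
  unfold Sv NF
  simp only [Pi.zero_apply, ← Finset.sum_sub_distrib, Pi.smul_apply]
  rw [Finset.sum_comm]
  refine Finset.sum_congr rfl fun i _ => ?_
  rw [← Sv_carry (hM i) N (x i)]
  unfold Sv
  rw [Finset.mul_sum]
  exact Finset.sum_congr rfl fun i' _ => by ring

end NF

/-- the "multiply up" embedding `ZMod m →+ ZMod N` for `m ∣ N`. -/
def upHom {m N : ℕ} (hm : 0 < m) (h : m ∣ N) : ZMod m →+ ZMod N where
  toFun u := ((N / m * u.val : ℕ) : ZMod N)
  map_zero' := by haveI : NeZero m := ⟨hm.ne'⟩; simp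
  map_add' a b := by
    haveI : NeZero m := ⟨hm.ne'⟩
    show ((N / m * (a + b).val : ℕ) : ZMod N) = ((N / m * a.val : ℕ) : ZMod N) + ((N / m * b.val : ℕ) : ZMod N)
    rw [ZMod.val_add, ← Nat.cast_add, ← Nat.mul_add, ZMod.natCast_eq_natCast_iff]
    have hmod := (Nat.mod_modEq (a.val + b.val) m).mul_left' (c := N / m)
    rwa [Nat.div_mul_cancel h] at hmod

theorem upHom_apply {m N : ℕ} (hm : 0 < m) (h : m ∣ N) (u : ZMod m) :
    upHom hm h u = ((N / m * u.val : ℕ) : ZMod N) := rfl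

/-- `1 + ν` for square-zero `ν` is an automorphism. -/
def nilEquiv {G : Type*} [AddCommGroup G] (ν : G →+ G) (hν : ∀ x, ν (ν x) = 0) :
    G ≃+ G where
  toFun x := x + ν x
  invFun x := x - ν x
  left_inv x := by simp [map_add, hν, add_sub_cancel_right]
  right_inv x := by simp [map_sub, hν]
  map_add' x y := by
    show (x + y) + ν (x + y) = (x + ν x) + (y + ν y)
    rw [map_add]; abel

theorem nilEquiv_symm_apply {G : Type*} [AddCommGroup G] (ν : G →+ G)
    (hν : ∀ x, ν (ν x) = 0) (x : G) : (nilEquiv ν hν).symm x = x - ν x := rfl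

/-- bundled symmetric cocycle. -/
structure SymCo (p : ℕ) (G : Type*) [AddCommGroup G] where
  c : G → G → ZMod p
  coc : IsCocycle c
  sym : ∀ x y, c x y = c y x

/-- extension group attached to a symmetric cocycle. -/
@[ext]
structure EE {G : Type*} [AddCommGroup G] (s : SymCo p G) where
  a : ZMod p
  x : G

namespace EE
variable {G : Type*} [AddCommGroup G] (s : SymCo p G)

def mke (a : ZMod p) (x : G) : EE s := ⟨a, x⟩

@[simp] theorem mke_a (a : ZMod p) (x : G) : (mke s a x).a = a := rfl
@[simp] theorem mke_x (a : ZMod p) (x : G) : (mke s a x).x = x := rfl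

instance : Zero (EE s) := ⟨⟨0, 0⟩⟩
instance : Add (EE s) := ⟨fun e f => ⟨e.a + f.a + s.c e.x f.x - s.c 0 0, e.x + f.x⟩⟩
instance : Neg (EE s) := ⟨fun e => ⟨- e.a - s.c e.x (-e.x) + s.c 0 0, - e.x⟩⟩

instance : AddCommGroup (EE s) where
  add := (· + ·)
  zero := 0
  neg := (- ·)
  nsmul := nsmulRec
  zsmul := zsmulRec
  add_assoc a b c := by
    have h := s.coc a.x b.x c.x
    refine EE.ext ?_ (add_assoc _ _ _)
    show (a.a + b.a + s.c a.x b.x - s.c 0 0) + c.a + s.c (a.x + b.x) c.x - s.c 0 0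
      = a.a + (b.a + c.a + s.c b.x c.x - s.c 0 0) + s.c a.x (b.x + c.x) - s.c 0 0
    linear_combination -h
  zero_add e := by
    refine EE.ext ?_ (zero_add _)
    show 0 + e.a + s.c 0 e.x - s.c 0 0 = e.a
    rw [cocycle_zero_left s.coc]
    ring
  add_zero e := by
    refine EE.ext ?_ (add_zero _)
    show e.a + 0 + s.c e.x 0 - s.c 0 0 = e.a
    rw [cocycle_zero_right s.coc]
    ring
  neg_add_cancel e := by
    refine EE.ext ?_ (neg_add_cancel _)
    show (- e.a - s.c e.x (-e.x) + s.c 0 0) + e.a + s.c (-e.x) e.x - s.c 0 0 = 0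
    rw [s.sym (-e.x) e.x]
    ring
  add_comm e f := by
    refine EE.ext ?_ (add_comm _ _)
    show e.a + f.a + s.c e.x f.x - s.c 0 0 = f.a + e.a + s.c f.x e.x - s.c 0 0
    rw [s.sym e.x f.x]
    ring

theorem add_def (e f : EE s) :
    e + f = ⟨e.a + f.a + s.c e.x f.x - s.c 0 0, e.x + f.x⟩ := rfl

theorem zero_def : (0 : EE s) = ⟨0, 0⟩ := rfl

theorem nsmul_mk0 (N : ℕ) (x : G) :
    N • (mke s 0 x) = mke s (Sv s.c N x) (N • x) := by
  induction N with
  | zero => simp [Sv, zero_nsmul, zero_def, mke]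
  | succ N ih =>
    rw [succ_nsmul, ih, add_def]
    unfold mke
    refine EE.ext ?_ (succ_nsmul x N).symm
    show Sv s.c N x + 0 + s.c (N • x) x - s.c 0 0 = Sv s.c (N + 1) x
    unfold Sv
    rw [Finset.sum_range_succ, s.sym (N • x) x]
    ring

theorem nsmul_mka (N : ℕ) (a : ZMod p) :
    N • (mke s a 0) = mke s (N • a) 0 := by
  induction N with
  | zero => simp [zero_nsmul, zero_def, mke]
  | succ N ih =>
    rw [succ_nsmul, ih, add_def]
    unfold mke
    refine EE.ext ?_ (by rw [add_zero])
    show N • a + a + s.c 0 0 - s.c 0 0 = (N + 1) • a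
    rw [succ_nsmul]
    ring

end EE

theorem T1 {M : ℕ} (hM : 0 < M) (c : ZMod M → ZMod M → ZMod p)
    (hc : IsCocycle c) (hs : ∀ x y, c x y = c y x) :
    ∃ (T : ZMod p) (f : ZMod M → ZMod p), ∀ x y,
      c x y = T * carryC p M x y + (f y - f (x + y) + f x) := by
  haveI : NeZero M := ⟨hM.ne'⟩
  set s : SymCo p (ZMod M) := ⟨c, hc, hs⟩ with hsdef
  set e : EE s := EE.mke s 0 1 with hedef
  set T : ZMod p := Sv c M 1 with hTdef
  set f0 : ZMod M → ZMod p := fun z => Sv c z.val 1 with hf0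
  refine ⟨T, fun z => - f0 z + c 0 0, fun x y => ?_⟩
  have hsm : ∀ z : ZMod M, z.val • e = EE.mke s (f0 z) z := by
    intro z
    rw [hedef, EE.nsmul_mk0]
    have : z.val • (1 : ZMod M) = z := by
      rw [nsmul_eq_mul, mul_one, ZMod.natCast_rightInverse z]
    rw [this]
  have hMe : M • e = EE.mke s T 0 := by
    rw [hedef, EE.nsmul_mk0]
    have : M • (1 : ZMod M) = 0 := by
      rw [nsmul_eq_mul, mul_one, ZMod.natCast_self]
    rw [this]
  have key : f0 x + f0 y + c x y - c 0 0
      = (((x.val + y.val) / M : ℕ) : ZMod p) * T + f0 (x + y) := by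
    have hA : (x.val + y.val) • e = EE.mke s (f0 x + f0 y + c x y - c 0 0) (x + y) := by
      rw [add_nsmul, hsm x, hsm y, EE.add_def]
      rfl
    have hsplit : x.val + y.val = M * ((x.val + y.val) / M) + (x + y).val := by
      rw [ZMod.val_add]
      exact (Nat.div_add_mod _ _).symm
    have hB : (M * ((x.val + y.val) / M) + (x + y).val) • e
        = EE.mke s ((((x.val + y.val) / M : ℕ) : ZMod p) * T + f0 (x + y)) (x + y) := by
      rw [add_nsmul, mul_nsmul, hMe, EE.nsmul_mka, hsm (x + y), EE.add_def]
      unfold EE.mke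
      refine EE.ext ?_ (zero_add _)
      show ((x.val + y.val) / M) • T + f0 (x + y) + s.c 0 (x + y) - s.c 0 0
        = (((x.val + y.val) / M : ℕ) : ZMod p) * T + f0 (x + y)
      rw [cocycle_zero_left s.coc, nsmul_eq_mul]
      ring
    have hA2 : (M * ((x.val + y.val) / M) + (x + y).val) • e
        = EE.mke s (f0 x + f0 y + c x y - c 0 0) (x + y) := by
      rw [← hsplit]; exact hA
    exact congrArg EE.a (hA2.symm.trans hB)
  have hcar : carryC p M x y = (((x.val + y.val) / M : ℕ) : ZMod p) := rfl
  rw [hcar]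
  linear_combination key

theorem T2 {A B : Type*} [AddCommGroup A] [AddCommGroup B]
    (c : A × B → A × B → ZMod p) (hc : IsCocycle c) (hs : ∀ x y, c x y = c y x) :
    ∃ f : A × B → ZMod p, ∀ x y, c x y =
      c (x.1, 0) (y.1, 0) + c (0, x.2) (0, y.2) + (f y - f (x + y) + f x) := by
  set s : SymCo p (A × B) := ⟨c, hc, hs⟩ with hsdef
  refine ⟨fun z => - c (z.1, 0) (0, z.2), fun x y => ?_⟩
  set u : A → EE s := fun a => EE.mke s 0 (a, 0) with hu
  set w : B → EE s := fun b => EE.mke s 0 (0, b) with hw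
  have h1 : ∀ a b, u a + w b = EE.mke s (c (a, 0) (0, b) - c 0 0) (a, b) := by
    intro a b
    rw [hu, hw, EE.add_def]
    unfold EE.mke
    refine EE.ext ?_ ?_
    · show 0 + 0 + s.c (a, 0) (0, b) - s.c 0 0 = c (a, 0) (0, b) - c 0 0
      show 0 + 0 + c (a, 0) (0, b) - c 0 0 = c (a, 0) (0, b) - c 0 0
      ring
    · show (a, 0) + (0, b) = (a, b)
      rw [Prod.mk_add_mk, add_zero, zero_add]
  have h2 : ∀ a a', u a + u a' = EE.mke s (c (a, 0) (a', 0) - c 0 0) (a + a', 0) := by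
    intro a a'
    rw [hu, EE.add_def]
    unfold EE.mke
    refine EE.ext ?_ ?_
    · show 0 + 0 + c (a, 0) (a', 0) - c 0 0 = c (a, 0) (a', 0) - c 0 0
      ring
    · show (a, 0) + (a', 0) = (a + a', 0)
      rw [Prod.mk_add_mk, add_zero]
  have h3 : ∀ b b', w b + w b' = EE.mke s (c (0, b) (0, b') - c 0 0) (0, b + b') := by
    intro b b'
    rw [hw, EE.add_def]
    unfold EE.mke
    refine EE.ext ?_ ?_
    · show 0 + 0 + c (0, b) (0, b') - c 0 0 = c (0, b) (0, b') - c 0 0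
      ring
    · show (0, b) + (0, b') = (0, b + b')
      rw [Prod.mk_add_mk, add_zero]
  have hLHS : (u x.1 + w x.2) + (u y.1 + w y.2)
      = EE.mke s ((c (x.1, 0) (0, x.2) - c 0 0) + (c (y.1, 0) (0, y.2) - c 0 0)
          + c x y - c 0 0) (x + y) := by
    rw [h1, h1, EE.add_def]
    unfold EE.mke
    refine EE.ext rfl ?_
    show ((x.1, x.2) : A × B) + (y.1, y.2) = x + y
    rw [Prod.mk.eta, Prod.mk.eta]
  have hRHS : (u x.1 + w x.2) + (u y.1 + w y.2)
      = EE.mke s ((c (x.1, 0) (y.1, 0) - c 0 0) + (c (0, x.2) (0, y.2) - c 0 0)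
          + (c (x.1 + y.1, 0) (0, x.2 + y.2) - c 0 0)) (x + y) := by
    rw [add_add_add_comm, h2, h3, EE.add_def]
    unfold EE.mke
    refine EE.ext ?_ ?_
    · show (c (x.1, 0) (y.1, 0) - c 0 0) + (c (0, x.2) (0, y.2) - c 0 0)
          + c (x.1 + y.1, 0) (0, x.2 + y.2) - c 0 0
        = (c (x.1, 0) (y.1, 0) - c 0 0) + (c (0, x.2) (0, y.2) - c 0 0)
          + (c (x.1 + y.1, 0) (0, x.2 + y.2) - c 0 0)
      ring
    · show ((x.1 + y.1, 0) : A × B) + (0, x.2 + y.2) = x + y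
      rw [Prod.mk_add_mk, add_zero, zero_add]
      exact (Prod.ext rfl rfl : ((x + y).1, (x + y).2) = x + y) ▸ rfl
  have key := congrArg EE.a (hLHS.symm.trans hRHS)
  simp only [EE.mke_a] at key
  show c x y = c (x.1, 0) (y.1, 0) + c (0, x.2) (0, y.2) +
      (-c (y.1, 0) (0, y.2) - -c (x.1 + y.1, 0) (0, x.2 + y.2) + -c (x.1, 0) (0, x.2))
  linear_combination key

/-- statement of the normal form theorem (T3). -/
def T3S (p : ℕ) (I : Type u) [Fintype I] : Prop :=
  ∀ M : I → ℕ, (∀ i, 0 < M i) →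
    ∀ c : (∀ i, ZMod (M i)) → (∀ i, ZMod (M i)) → ZMod p, IsCocycle c →
      (∀ x y, c x y = c y x) →
      ∃ (v : I → ZMod p) (f : (∀ i, ZMod (M i)) → ZMod p), ∀ x y,
        c x y = NF p M v x y + (f y - f (x + y) + f x)

theorem T3_empty : T3S p PEmpty := by
  intro M hM c hc hs
  refine ⟨0, fun _ => c 0 0, fun x y => ?_⟩
  have hx : x = 0 := Subsingleton.elim _ _
  have hy : y = 0 := Subsingleton.elim _ _
  subst hx; subst hy
  rw [add_zero]
  show c 0 0 = NF p M 0 0 0 + (c 0 0 - c 0 0 + c 0 0)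
  have : NF p M 0 0 0 = 0 := by
    unfold NF
    simp
  rw [this]
  ring

theorem T3_transport {I J : Type u} [Fintype I] [Fintype J] (e : I ≃ J)
    (hI : T3S p I) : T3S p J := by
  intro M hM c hc hs
  set E := (RingEquiv.piCongrLeft (fun j => ZMod (M j)) e).toAddEquiv with hE
  have hEsymm : ∀ (x : ∀ j, ZMod (M j)) (i : I), (E.symm x) i = x (e i) := fun _ _ => rfl
  set c' : (∀ i : I, ZMod (M (e i))) → (∀ i : I, ZMod (M (e i))) → ZMod p :=
    fun x y => c (E x) (E y) with hc'
  obtain ⟨v₁, f₁, h₁⟩ := hI (fun i => M (e i)) (fun i => hM (e i)) c'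
    (isCocycle_pullback hc E.toAddMonoidHom) (fun x y => hs _ _)
  refine ⟨fun j => v₁ (e.symm j), fun z => f₁ (E.symm z), fun x y => ?_⟩
  have hx : c x y = c' (E.symm x) (E.symm y) := by
    rw [hc']
    simp only [AddEquiv.apply_symm_apply]
  rw [hx, h₁]
  have hNF : NF p (fun i => M (e i)) v₁ (E.symm x) (E.symm y)
      = NF p M (fun j => v₁ (e.symm j)) x y := by
    unfold NF
    rw [← Equiv.sum_comp e (fun j => v₁ (e.symm j) * carryC p (M j) (x j) (y j))]
    refine Finset.sum_congr rfl fun i _ => ?_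
    rw [hEsymm, hEsymm, Equiv.symm_apply_apply]
  rw [hNF, ← map_add]

theorem T3_option {J : Type u} [Fintype J] (hJ : T3S p J) : T3S p (Option J) := by
  intro M hM c hc hs
  set E : (∀ i : Option J, ZMod (M i)) ≃+ (ZMod (M none) × ∀ j, ZMod (M (some j))) :=
    { toEquiv := Equiv.piOptionEquivProd (β := fun i => ZMod (M i))
      map_add' := fun _ _ => rfl } with hE
  set c' : (ZMod (M none) × ∀ j, ZMod (M (some j))) → _ → ZMod p :=
    fun x y => c (E.symm x) (E.symm y) with hc'
  have hc'coc : IsCocycle c' := isCocycle_pullback hc E.symm.toAddMonoidHom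
  have hc'sym : ∀ x y, c' x y = c' y x := fun x y => hs _ _
  obtain ⟨f₂, h₂⟩ := T2 c' hc'coc hc'sym
  -- cyclic piece
  set cA : ZMod (M none) → ZMod (M none) → ZMod p :=
    fun a a' => c' (a, 0) (a', 0) with hcA
  have hcAcoc : IsCocycle cA :=
    isCocycle_pullback hc'coc (AddMonoidHom.inl _ _)
  obtain ⟨T, fA, hA⟩ := T1 (hM none) cA hcAcoc (fun a a' => hc'sym _ _)
  -- tail piece
  set cB : (∀ j, ZMod (M (some j))) → _ → ZMod p :=
    fun b b' => c' (0, b) (0, b') with hcB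
  have hcBcoc : IsCocycle cB :=
    isCocycle_pullback hc'coc (AddMonoidHom.inr _ _)
  obtain ⟨vJ, fB, hB⟩ := hJ (fun j => M (some j)) (fun j => hM (some j)) cB hcBcoc
    (fun b b' => hc'sym _ _)
  refine ⟨fun i => Option.casesOn i T vJ,
    fun z => f₂ (E z) + fA (z none) + fB (fun j => z (some j)), fun x y => ?_⟩
  have hx : c x y = c' (E x) (E y) := by
    rw [hc']
    simp only [AddEquiv.symm_apply_apply]
  have h2 := h₂ (E x) (E y)
  have hEadd : E x + E y = E (x + y) := (map_add E x y).symm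
  rw [hEadd] at h2
  have hA1 := hA (x none) (y none)
  have hB1 := hB (fun j => x (some j)) (fun j => y (some j))
  have hNF : NF p M (fun i => Option.casesOn i T vJ) x y
      = T * carryC p (M none) (x none) (y none)
        + NF p (fun j => M (some j)) vJ (fun j => x (some j)) (fun j => y (some j)) := by
    unfold NF
    rw [Fintype.sum_option]
  -- identify the pieces of h2 with hA1 / hB1
  have e1 : (E x).1 = x none := rfl
  have e2 : (E y).1 = y none := rfl
  have e3 : (E (x + y)).1 = (x + y) none := rfl
  have e4 : (E x).2 = fun j => x (some j) := rfl
  have e5 : (E y).2 = fun j => y (some j) := rfl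
  have hA1' : c' ((E x).1, 0) ((E y).1, 0)
      = T * carryC p (M none) (x none) (y none)
        + (fA (y none) - fA (x none + y none) + fA (x none)) := hA1
  have hB1' : c' (0, (E x).2) (0, (E y).2)
      = NF p (fun j => M (some j)) vJ (fun j => x (some j)) (fun j => y (some j))
        + (fB (fun j => y (some j)) - fB (fun j => x (some j) + y (some j))
            + fB (fun j => x (some j))) := hB1
  rw [hx, hNF]
  show c' (E x) (E y)
      = T * carryC p (M none) (x none) (y none)
        + NF p (fun j => M (some j)) vJ (fun j => x (some j)) (fun j => y (some j))
        + ((f₂ (E y) + fA (y none) + fB (fun j => y (some j)))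
           - (f₂ (E (x + y)) + fA (x none + y none) + fB (fun j => x (some j) + y (some j)))
           + (f₂ (E x) + fA (x none) + fB (fun j => x (some j))))
  linear_combination h2 + hA1' + hB1'

theorem T3' (I : Type u) [Fintype I] : T3S p I := by
  refine Fintype.induction_empty_option (P := fun α inst => @T3S p α inst) ?_ ?_ ?_ I
  · intro α β instβ e h
    exact @T3_transport p α β (Fintype.ofEquiv β e.symm) instβ e h
  · exact T3_empty
  · intro α _ h
    exact T3_option h

theorem single_torsion {I : Type u} [DecidableEq I] {M : I → ℕ} (hM : ∀ i, 0 < M i)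
    (i : I) (N : ℕ) (hN : (N : ZMod (M i)) = 0) :
    N • (Pi.single i (1 : ZMod (M i)) : ∀ i, ZMod (M i)) = 0 := by
  funext j
  rw [Pi.smul_apply]
  by_cases hj : j = i
  · subst hj
    rw [Pi.single_eq_same, nsmul_eq_mul, mul_one, hN]
    rfl
  · rw [Pi.single_eq_of_ne hj, smul_zero]
    rfl

theorem Sv_NF_single {I : Type u} [Fintype I] [DecidableEq I] {M : I → ℕ}
    (hM1 : ∀ i, 1 < M i) (v : I → ZMod p) (i : I) :
    Sv (NF p M v) (M i) (Pi.single i 1) = v i := by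
  have hM : ∀ i, 0 < M i := fun i => Nat.lt_of_lt_of_le Nat.zero_lt_one (hM1 i).le
  rw [Sv_NF hM]
  rw [Finset.sum_eq_single i]
  · haveI : Fact (1 < M i) := ⟨hM1 i⟩
    haveI : NeZero (M i) := ⟨(hM i).ne'⟩
    rw [Pi.single_eq_same, ZMod.val_one, mul_one, Nat.div_self (hM i)]
    simp
  · intro i' _ hne
    haveI : NeZero (M i') := ⟨(hM i').ne'⟩
    rw [Pi.single_eq_of_ne hne, ZMod.val_zero, Nat.mul_zero, Nat.zero_div]
    simp
  · intro h; exact absurd (Finset.mem_univ i) h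

theorem Sv_recover {I : Type u} [Fintype I] [DecidableEq I] {M : I → ℕ}
    (hM1 : ∀ i, 1 < M i) (hMp : ∀ i, (M i : ZMod p) = 0)
    {c : (∀ i, ZMod (M i)) → (∀ i, ZMod (M i)) → ZMod p} {v : I → ZMod p}
    {f : (∀ i, ZMod (M i)) → ZMod p}
    (h : ∀ x y, c x y = NF p M v x y + (f y - f (x + y) + f x)) (i : I) :
    Sv c (M i) (Pi.single i 1) = v i := by
  have hM : ∀ i, 0 < M i := fun i => Nat.lt_of_lt_of_le Nat.zero_lt_one (hM1 i).le
  have h0 : ∀ x y, c x y = (1 : ZMod p) *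
      NF p M v ((AddEquiv.refl _).symm x) ((AddEquiv.refl _).symm y)
      + (f y - f (x + y) + f x) := by
    intro x y
    rw [h x y]
    simp
  have htor : (M i) • (Pi.single i (1 : ZMod (M i)) : ∀ i, ZMod (M i)) = 0 :=
    single_torsion hM i (M i) (ZMod.natCast_self (M i))
  have := Sv_rel h0 htor (hMp i)
  rw [this, one_mul]
  show Sv (NF p M v) (M i) (Pi.single i 1) = v i
  exact Sv_NF_single hM1 v i

/-- the subtype of symmetric cocycles. -/
abbrev Xt (p : ℕ) (G : Type*) [AddCommGroup G] :=
  {c : G → G → ZMod p // IsCocycle c ∧ ∀ x y : G, c x y = c y x}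

theorem renorm {I : Type u} [Fintype I] [DecidableEq I] {M : I → ℕ}
    (hM1 : ∀ i, 1 < M i) (hMp : ∀ i, (M i : ZMod p) = 0)
    (c : Xt p (∀ i, ZMod (M i))) (σ : (∀ i, ZMod (M i)) ≃+ (∀ i, ZMod (M i)))
    (lam : (ZMod p)ˣ) :
    SymOrbitRel p (∀ i, ZMod (M i)) c
      ⟨NF p M (fun i => (lam : ZMod p) * Sv c.1 (M i) (σ.symm (Pi.single i 1))),
        NF_cocycle (fun i => Nat.lt_of_lt_of_le Nat.zero_lt_one (hM1 i).le) _,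
        fun x y => NF_symm _ x y⟩ := by
  have hM : ∀ i, 0 < M i := fun i => Nat.lt_of_lt_of_le Nat.zero_lt_one (hM1 i).le
  set c' : (∀ i, ZMod (M i)) → (∀ i, ZMod (M i)) → ZMod p :=
    fun x y => (lam : ZMod p) * c.1 (σ.symm x) (σ.symm y) with hcp
  have hcoc : IsCocycle c' :=
    isCocycle_smul (isCocycle_pullback c.2.1 σ.symm.toAddMonoidHom) _
  have hsym : ∀ x y, c' x y = c' y x := fun x y => by rw [hcp]; simp only []; rw [c.2.2]
  obtain ⟨v₀, f, hf⟩ := T3' I M hM c' hcoc hsym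
  have hrec : ∀ i, v₀ i = (lam : ZMod p) * Sv c.1 (M i) (σ.symm (Pi.single i 1)) := by
    intro i
    rw [← Sv_recover hM1 hMp hf i]
    have h0 : ∀ x y, c' x y = (lam : ZMod p) * c.1 (σ.symm x) (σ.symm y) +
        ((fun _ => (0 : ZMod p)) y - (fun _ => (0 : ZMod p)) (x + y)
          + (fun _ => (0 : ZMod p)) x) := by
      intro x y
      rw [hcp]
      simp
    have htor : (M i) • (Pi.single i (1 : ZMod (M i)) : ∀ i, ZMod (M i)) = 0 :=
      single_torsion hM i (M i) (ZMod.natCast_self (M i))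
    rw [Sv_rel h0 htor (hMp i)]
  refine ⟨σ, lam, fun z => - f z, fun x y => ?_⟩
  show NF p M (fun i => (lam : ZMod p) * Sv c.1 (M i) (σ.symm (Pi.single i 1))) x y = _
  have hNFeq : NF p M (fun i => (lam : ZMod p) * Sv c.1 (M i) (σ.symm (Pi.single i 1))) x y
      = NF p M v₀ x y := by
    unfold NF
    exact Finset.sum_congr rfl fun i _ => by rw [hrec i]
  rw [hNFeq]
  have := hf x y
  rw [hcp] at this
  simp only [] at this
  linear_combination -this

section Main

variable {p : ℕ} [Fact p.Prime] {t : ℕ} {n : Fin t → ℕ}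
  {I : Type} [Fintype I] [DecidableEq I] {β : I → Fin t}

/-- the modulus vector. -/
abbrev Mv (p : ℕ) (n : Fin t → ℕ) (β : I → Fin t) : I → ℕ := fun i => p ^ n (β i)

theorem hM1' (hn : ∀ j, 0 < n j) : ∀ i, 1 < Mv p n β i := fun i =>
  Nat.one_lt_pow (hn (β i)).ne' (Fact.out : p.Prime).one_lt

theorem hM0' (hn : ∀ j, 0 < n j) : ∀ i, 0 < Mv p n β i := fun i =>
  Nat.lt_of_lt_of_le Nat.zero_lt_one (hM1' hn i).le

theorem hMp' (hn : ∀ j, 0 < n j) : ∀ i, ((Mv p n β i : ℕ) : ZMod p) = 0 := by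
  intro i
  push_cast
  rw [ZMod.natCast_self, zero_pow (hn (β i)).ne']

theorem powcast0 (hn : ∀ j, 0 < n j) (k : Fin t) (i : I) (h : β i = k) :
    ((p ^ n k : ℕ) : ZMod (Mv p n β i)) = 0 := by
  rw [show Mv p n β i = p ^ n k by rw [Mv, h]]
  exact ZMod.natCast_self _

open Classical in
/-- the set of "blocks detected" by a symmetric cocycle. -/
noncomputable def phiSet (n : Fin t → ℕ) (β : I → Fin t)
    (c : Xt p (∀ i, ZMod (Mv p n β i))) : Finset (Fin t) :=
  Finset.univ.filter fun k =>
    ∃ x, (p ^ n k) • x = 0 ∧ Sv c.1 (p ^ n k) x ≠ 0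

/-- orbit invariant. -/
noncomputable def phi (n : Fin t → ℕ) (β : I → Fin t)
    (c : Xt p (∀ i, ZMod (Mv p n β i))) : ℕ :=
  (phiSet n β c).sup fun k => (k : ℕ) + 1

theorem phi_le (c : Xt p (∀ i, ZMod (Mv p n β i))) : phi n β c ≤ t :=
  Finset.sup_le fun k _ => k.isLt

theorem phi_rel (hn : ∀ j, 0 < n j) {c d : Xt p (∀ i, ZMod (Mv p n β i))}
    (h : SymOrbitRel p _ c d) : phi n β c = phi n β d := by
  obtain ⟨σ, lam, f, hrel⟩ := h
  have hcast : ∀ k : Fin t, ((p ^ n k : ℕ) : ZMod p) = 0 := by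
    intro k
    push_cast
    rw [ZMod.natCast_self, zero_pow (hn k).ne']
  unfold phi
  congr 1
  unfold phiSet
  refine Finset.filter_congr fun k _ => ?_
  constructor
  · rintro ⟨x, hxt, hxs⟩
    refine ⟨σ x, by rw [← map_nsmul, hxt, map_zero], ?_⟩
    rw [Sv_rel hrel (by rw [← map_nsmul, hxt, map_zero]) (hcast k), σ.symm_apply_apply]
    intro h0
    have h1 := congrArg (fun z => ((lam⁻¹ : (ZMod p)ˣ) : ZMod p) * z) h0
    simp only [Units.inv_mul_cancel_left, mul_zero] at h1
    exact hxs h1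
  · rintro ⟨x, hxt, hxs⟩
    refine ⟨σ.symm x, by rw [← map_nsmul, hxt, map_zero], ?_⟩
    intro h0
    exact hxs (by rw [Sv_rel hrel hxt (hcast k), h0, mul_zero])

/-- the zero representative. -/
def zeroX : Xt p (∀ i, ZMod (Mv p n β i)) :=
  ⟨fun _ _ => 0, fun _ _ _ => by ring, fun _ _ => rfl⟩

/-- normal-form representatives. -/
def nfX (hn : ∀ j, 0 < n j) (v : I → ZMod p) : Xt p (∀ i, ZMod (Mv p n β i)) :=
  ⟨NF p (Mv p n β) v, NF_cocycle (hM0' hn) v, fun x y => NF_symm v x y⟩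

theorem phi_zeroX : phi n β (zeroX : Xt p (∀ i, ZMod (Mv p n β i))) = 0 := by
  unfold phi
  have : phiSet n β (zeroX : Xt p (∀ i, ZMod (Mv p n β i))) = ∅ := by
    unfold phiSet
    refine Finset.filter_false_of_mem fun k _ => ?_
    rintro ⟨x, _, hxs⟩
    refine hxs ?_
    unfold Sv zeroX
    simp
  rw [this]
  rfl

theorem Sv_NF_high (hmono : StrictMono n) (hn : ∀ j, 0 < n j)
    {v : I → ZMod p} {k j : Fin t} (hkj : k < j)
    (htop : ∀ i, k < β i → v i = 0) (x : ∀ i, ZMod (Mv p n β i)) :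
    Sv (NF p (Mv p n β) v) (p ^ n j) x = 0 := by
  rw [Sv_NF (hM0' hn)]
  refine Finset.sum_eq_zero fun i _ => ?_
  by_cases hbi : k < β i
  · rw [htop i hbi, zero_mul]
  · have hlt : n (β i) < n j := hmono (lt_of_le_of_lt (not_lt.mp hbi) hkj)
    have hrw : n j = n (β i) + (n j - n (β i)) := by omega
    have hdiv : p ^ n j * (x i).val / Mv p n β i
        = p ^ (n j - n (β i)) * (x i).val := by
      rw [show (p : ℕ) ^ n j = Mv p n β i * p ^ (n j - n (β i)) by
        rw [Mv, ← pow_add, Nat.add_sub_cancel' (le_of_lt hlt)]]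
      rw [mul_assoc, Nat.mul_div_cancel_left _ (hM0' hn i)]
    rw [hdiv]
    push_cast
    rw [ZMod.natCast_self, zero_pow (by omega : n j - n (β i) ≠ 0)]
    ring

theorem phi_NF (hmono : StrictMono n) (hn : ∀ j, 0 < n j)
    {v : I → ZMod p} {k : Fin t} {a₀ : I} (hβa₀ : β a₀ = k) (hva₀ : v a₀ ≠ 0)
    (htop : ∀ i, k < β i → v i = 0) :
    phi n β (nfX hn v) = (k : ℕ) + 1 := by
  have hmem : k ∈ phiSet n β (nfX hn v) := by
    unfold phiSet
    rw [Finset.mem_filter]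
    refine ⟨Finset.mem_univ _, Pi.single a₀ 1, ?_, ?_⟩
    · exact single_torsion (hM0' hn) a₀ _ (powcast0 hn k a₀ hβa₀)
    · have hNa : p ^ n k = Mv p n β a₀ := by rw [Mv, hβa₀]
      rw [hNa]
      show Sv (NF p (Mv p n β) v) (Mv p n β a₀) (Pi.single a₀ 1) ≠ 0
      rw [Sv_NF_single (hM1' hn) v a₀]
      exact hva₀
  have hout : ∀ j ∈ phiSet n β (nfX hn v), (j : ℕ) + 1 ≤ (k : ℕ) + 1 := by
    intro j hj
    by_contra hcon
    have hkj : k < j := by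
      rw [Fin.lt_def]
      omega
    unfold phiSet at hj
    rw [Finset.mem_filter] at hj
    obtain ⟨-, x, -, hxs⟩ := hj
    exact hxs (Sv_NF_high hmono hn hkj htop x)
  unfold phi
  exact le_antisymm (Finset.sup_le hout) (Finset.le_sup (f := fun k : Fin t => (k : ℕ) + 1) hmem)

end Main

section Move

variable {p : ℕ} [Fact p.Prime] {t : ℕ} {n : Fin t → ℕ}
  {I : Type} [Fintype I] [DecidableEq I] {β : I → Fin t}

theorem move (hmono : StrictMono n) (hn : ∀ j, 0 < n j)
    (v : I → ZMod p) (i₀ : I) (lam : (ZMod p)ˣ) (w : I → ZMod p)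
    (hw0 : w i₀ = 0) (hble : ∀ i, w i ≠ 0 → β i ≤ β i₀) :
    Quot.mk (SymOrbitRel p (∀ i, ZMod (Mv p n β i))) (nfX hn v)
      = Quot.mk _ (nfX hn fun i => (lam : ZMod p) * (v i + v i₀ * w i)) := by
  haveI : NeZero p := ⟨(Fact.out : p.Prime).pos.ne'⟩
  have hM0 := hM0' (p := p) (β := β) hn
  have hM1 := hM1' (p := p) (β := β) hn
  have hple : ∀ i, p ≤ Mv p n β i := by
    intro i
    calc p = p ^ 1 := (pow_one p).symm
    _ ≤ p ^ n (β i) := Nat.pow_le_pow_right (Fact.out : p.Prime).pos (hn (β i))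
  set Φ : ∀ i, ZMod (Mv p n β i) →+ ZMod (Mv p n β i₀) := fun i =>
    if h : β i ≤ β i₀ ∧ i ≠ i₀ then
      - ((AddMonoidHom.mulLeft (((w i).val : ℕ) : ZMod (Mv p n β i₀))).comp
          (upHom (hM0 i) (pow_dvd_pow p (hmono.monotone h.1))))
    else 0 with hΦ
  have hΦ0 : Φ i₀ = 0 := by
    rw [hΦ]
    exact dif_neg (by simp)
  set ν : (∀ i, ZMod (Mv p n β i)) →+ (∀ i, ZMod (Mv p n β i)) :=
    { toFun := fun x => Pi.single i₀ (∑ i, Φ i (x i))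
      map_zero' := by simp
      map_add' := by
        intro x y
        simp only [Pi.add_apply, map_add, Finset.sum_add_distrib, Pi.single_add] } with hν
  have hνap : ∀ x, ν x = Pi.single i₀ (∑ i, Φ i (x i)) := fun _ => rfl
  have hνν : ∀ x, ν (ν x) = 0 := by
    intro x
    rw [hνap, hνap]
    have : ∀ i, Φ i ((Pi.single i₀ (∑ i, Φ i (x i)) : ∀ i, ZMod (Mv p n β i)) i) = 0 := by
      intro i
      by_cases hi : i = i₀
      · subst hi
        rw [Pi.single_eq_same, hΦ0]
        rfl
      · rw [Pi.single_eq_of_ne hi, map_zero]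
    rw [Finset.sum_congr rfl (fun i _ => this i), Finset.sum_const_zero, Pi.single_zero]
  set σ := nilEquiv ν hνν with hσ
  have hrel := renorm (hM1' hn) (hMp' hn) (nfX hn v) σ lam
  have hνδ : ∀ i : I, ν (Pi.single i 1) = Pi.single i₀ (Φ i 1) := by
    intro i
    rw [hνap]
    congr 1
    rw [Finset.sum_eq_single i]
    · rw [Pi.single_eq_same]
    · intro i' _ hne
      rw [Pi.single_eq_of_ne hne, map_zero]
    · intro h; exact absurd (Finset.mem_univ i) h
  have hvec : ∀ i, (lam : ZMod p) * Sv (nfX hn v).1 (Mv p n β i) (σ.symm (Pi.single i 1))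
      = (lam : ZMod p) * (v i + v i₀ * w i) := by
    intro i
    congr 1
    rw [hσ, nilEquiv_symm_apply, hνδ]
    by_cases hi : i = i₀
    · subst hi
      rw [hΦ0]
      show Sv (NF p (Mv p n β) v) (Mv p n β i) (Pi.single i 1 - Pi.single i 0) = _
      rw [Pi.single_zero, sub_zero, Sv_NF_single hM1, hw0, mul_zero, add_zero]
    by_cases hc : β i ≤ β i₀
    · -- main case
      haveI : Fact (1 < Mv p n β i) := ⟨hM1 i⟩
      have hdvd : Mv p n β i ∣ Mv p n β i₀ := pow_dvd_pow p (hmono.monotone hc)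
      set Q : ℕ := (w i).val * (Mv p n β i₀ / Mv p n β i) with hQdef
      have hΦeq : Φ i = -((AddMonoidHom.mulLeft (((w i).val : ℕ) : ZMod (Mv p n β i₀))).comp
          (upHom (hM0 i) (pow_dvd_pow p (hmono.monotone hc)))) := by
        rw [hΦ]
        exact dif_pos ⟨hc, hi⟩
      have hΦ1 : Φ i 1 = -((Q : ℕ) : ZMod (Mv p n β i₀)) := by
        rw [hΦeq]
        show -((((w i).val : ℕ) : ZMod (Mv p n β i₀))
            * (upHom (hM0 i) (pow_dvd_pow p (hmono.monotone hc)) 1)) = _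
        rw [upHom_apply, ZMod.val_one, mul_one, hQdef]
        push_cast
        ring
      rw [hΦ1]
      have hQlt : Q < Mv p n β i₀ := by
        have h1 : (w i).val < Mv p n β i := lt_of_lt_of_le (ZMod.val_lt (w i)) (hple i)
        have h2 : 0 < Mv p n β i₀ / Mv p n β i :=
          Nat.div_pos (Nat.le_of_dvd (hM0 i₀) hdvd) (hM0 i)
        calc Q < Mv p n β i * (Mv p n β i₀ / Mv p n β i) :=
          (Nat.mul_lt_mul_right h2).mpr h1
        _ = Mv p n β i₀ := Nat.mul_div_cancel' hdvd
      set wv : ∀ i', ZMod (Mv p n β i') :=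
        Pi.single i 1 - Pi.single i₀ (-((Q : ℕ) : ZMod (Mv p n β i₀))) with hwv
      show Sv (NF p (Mv p n β) v) (Mv p n β i) wv = v i + v i₀ * w i
      rw [Sv_NF hM0]
      have hvanish : ∀ i', i' ∉ ({i, i₀} : Finset I) →
          v i' * ((Mv p n β i * (wv i').val / Mv p n β i' : ℕ) : ZMod p) = 0 := by
        intro i' hi'
        rw [Finset.mem_insert, Finset.mem_singleton] at hi'
        push_neg at hi'
        have : wv i' = 0 := by
          rw [hwv, Pi.sub_apply, Pi.single_eq_of_ne (Ne.symm (Ne.symm hi'.1)),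
            Pi.single_eq_of_ne hi'.2, sub_zero]
        rw [this]
        haveI : NeZero (Mv p n β i') := ⟨(hM0 i').ne'⟩
        rw [ZMod.val_zero, Nat.mul_zero, Nat.zero_div]
        simp
      rw [← Finset.sum_subset (Finset.subset_univ ({i, i₀} : Finset I))
        (fun i' _ hi' => hvanish i' hi'), Finset.sum_pair hi]
      have hterm1 : v i * ((Mv p n β i * (wv i).val / Mv p n β i : ℕ) : ZMod p) = v i := by
        have : wv i = 1 := by
          rw [hwv, Pi.sub_apply, Pi.single_eq_same, Pi.single_eq_of_ne hi, sub_zero]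
        rw [this, ZMod.val_one, Nat.mul_one, Nat.div_self (hM0 i)]
        simp
      have hterm2 : v i₀ * ((Mv p n β i * (wv i₀).val / Mv p n β i₀ : ℕ) : ZMod p)
          = v i₀ * w i := by
        have hwv0 : wv i₀ = ((Q : ℕ) : ZMod (Mv p n β i₀)) := by
          rw [hwv, Pi.sub_apply, Pi.single_eq_of_ne (Ne.symm hi), Pi.single_eq_same,
            zero_sub, neg_neg]
        rw [hwv0, ZMod.val_natCast_of_lt hQlt]
        have harith : Mv p n β i * Q / Mv p n β i₀ = (w i).val := by
          rw [hQdef, ← mul_assoc, mul_comm (Mv p n β i) ((w i).val), mul_assoc,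
            Nat.mul_div_cancel' hdvd, Nat.mul_div_cancel _ (hM0 i₀)]
        rw [harith, ZMod.natCast_rightInverse (w i)]
      rw [hterm1, hterm2]
    · -- irrelevant block
      have hwi : w i = 0 := by
        by_contra hne
        exact hc (hble i hne)
      have hΦeq : Φ i = 0 := by
        rw [hΦ]
        exact dif_neg (by tauto)
      rw [hΦeq, AddMonoidHom.zero_apply, Pi.single_zero, sub_zero]
      show Sv (NF p (Mv p n β) v) (Mv p n β i) (Pi.single i 1) = v i + v i₀ * w i
      rw [Sv_NF_single hM1, hwi, mul_zero, add_zero]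
  refine (Quot.sound hrel).trans ?_
  congr 1
  refine Subtype.ext ?_
  show NF p (Mv p n β) _ = NF p (Mv p n β) _
  exact congrArg (fun u => NF p (Mv p n β) u) (funext hvec)

end Move

section Chain

variable {p : ℕ} [Fact p.Prime] {t : ℕ} {n : Fin t → ℕ}
  {I : Type} [Fintype I] [DecidableEq I] {β : I → Fin t}

theorem chain1 (hmono : StrictMono n) (hn : ∀ j, 0 < n j)
    (g : Fin t → I) (hg : ∀ j, β (g j) = j) (v : I → ZMod p) (k : Fin t)
    (hgk : v (g k) ≠ 0) (htop : ∀ i, k < β i → v i = 0) :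
    Quot.mk (SymOrbitRel p (∀ i, ZMod (Mv p n β i))) (nfX hn v)
      = Quot.mk _ (nfX hn (Pi.single (g k) 1)) := by
  set lam : (ZMod p)ˣ := (Units.mk0 (v (g k)) hgk)⁻¹ with hlam
  set w : I → ZMod p := fun i => if i = g k then 0 else - v i * (v (g k))⁻¹ with hw
  have hw0 : w (g k) = 0 := by rw [hw]; simp
  have hble : ∀ i, w i ≠ 0 → β i ≤ β (g k) := by
    intro i hwi
    rw [hg]
    by_contra hcon
    have hki : k < β i := not_le.mp hcon
    apply hwi
    rw [hw]
    simp only []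
    rw [htop i hki]
    have : ¬ i = g k := by
      intro hik
      rw [hik, hg] at hki
      exact lt_irrefl _ hki
    rw [if_neg this]
    ring
  rw [move hmono hn v (g k) lam w hw0 hble]
  refine congrArg (fun u => Quot.mk (SymOrbitRel p (∀ i, ZMod (Mv p n β i))) (nfX hn u))
    (funext fun i => ?_)
  have hlamval : (lam : ZMod p) = (v (g k))⁻¹ := by
    rw [hlam, Units.val_inv_eq_inv_val, Units.val_mk0]
  by_cases hik : i = g k
  · subst hik
    rw [hw0, mul_zero, add_zero, hlamval, Pi.single_eq_same, inv_mul_cancel₀ hgk]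
  · rw [hw]
    simp only []
    rw [if_neg hik, Pi.single_eq_of_ne hik, hlamval]
    field_simp
    ring

theorem chain (hmono : StrictMono n) (hn : ∀ j, 0 < n j)
    (g : Fin t → I) (hg : ∀ j, β (g j) = j) (v : I → ZMod p) (k : Fin t) (a₀ : I)
    (hβa₀ : β a₀ = k) (hva₀ : v a₀ ≠ 0) (htop : ∀ i, k < β i → v i = 0) :
    Quot.mk (SymOrbitRel p (∀ i, ZMod (Mv p n β i))) (nfX hn v)
      = Quot.mk _ (nfX hn (Pi.single (g k) 1)) := by
  by_cases hgk : v (g k) ≠ 0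
  · exact chain1 hmono hn g hg v k hgk htop
  push_neg at hgk
  have hne : a₀ ≠ g k := fun h => hva₀ (h ▸ hgk)
  set w : I → ZMod p := fun i => if i = g k then (v a₀)⁻¹ else 0 with hw
  have hw0 : w a₀ = 0 := by rw [hw]; simp only []; rw [if_neg hne]
  have hble : ∀ i, w i ≠ 0 → β i ≤ β a₀ := by
    intro i hwi
    have : i = g k := by
      by_contra hcon
      apply hwi
      rw [hw]
      simp only []
      rw [if_neg hcon]
    rw [this, hg, hβa₀]
  rw [move hmono hn v a₀ 1 w hw0 hble]
  set v₁ : I → ZMod p := fun i => (1 : ZMod p) * (v i + v a₀ * w i) with hv₁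
  have hv₁gk : v₁ (g k) ≠ 0 := by
    have h1 : v₁ (g k) = 1 := by
      simp only [hv₁, hw, if_pos rfl, hgk, if_true, eq_self_iff_true]
      rw [mul_inv_cancel₀ hva₀]
      ring
    rw [h1]
    exact one_ne_zero
  have htop₁ : ∀ i, k < β i → v₁ i = 0 := by
    intro i hki
    have hig : ¬ i = g k := by
      intro hik
      rw [hik, hg] at hki
      exact lt_irrefl _ hki
    rw [hv₁]
    simp only []
    rw [hw]
    simp only []
    rw [if_neg hig, htop i hki]
    ring
  exact chain1 hmono hn g hg v₁ k hv₁gk htop₁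

theorem classify (hmono : StrictMono n) (hn : ∀ j, 0 < n j)
    (g : Fin t → I) (hg : ∀ j, β (g j) = j) (c : Xt p (∀ i, ZMod (Mv p n β i))) :
    (phi n β c = 0 ∧ Quot.mk (SymOrbitRel p _) c = Quot.mk _ zeroX)
    ∨ ∃ k : Fin t, phi n β c = (k : ℕ) + 1
        ∧ Quot.mk (SymOrbitRel p _) c = Quot.mk _ (nfX hn (Pi.single (g k) 1)) := by
  classical
  obtain ⟨v, f, hvf⟩ := T3' I (Mv p n β) (hM0' hn) c.1 c.2.1 c.2.2
  have hrel : SymOrbitRel p _ c (nfX hn v) := by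
    refine ⟨AddEquiv.refl _, 1, fun z => - f z, fun x y => ?_⟩
    show NF p (Mv p n β) v x y = _
    have hre : ∀ z : (∀ i, ZMod (Mv p n β i)), (AddEquiv.refl (∀ i, ZMod (Mv p n β i))).symm z = z :=
      fun _ => rfl
    simp only [hre, Units.val_one, one_mul]
    linear_combination - hvf x y
  have hq1 := Quot.sound hrel
  have hphi1 := phi_rel hn hrel
  by_cases hv : v = 0
  · left
    subst hv
    have hz : (nfX hn (0 : I → ZMod p) : Xt p (∀ i, ZMod (Mv p n β i))) = zeroX := by
      refine Subtype.ext ?_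
      show NF p (Mv p n β) 0 = fun _ _ => (0 : ZMod p)
      funext x y
      unfold NF
      simp
    refine ⟨?_, ?_⟩
    · rw [hphi1, hz, phi_zeroX]
    · rw [hq1, hz]
  · right
    obtain ⟨i₀, hi₀'⟩ := Function.ne_iff.mp hv
    have hi₀ : v i₀ ≠ 0 := by simpa using hi₀'
    set K : Finset (Fin t) := Finset.univ.filter (fun j => ∃ i, β i = j ∧ v i ≠ 0) with hK
    have hKne : K.Nonempty := ⟨β i₀, by
      rw [hK, Finset.mem_filter]
      exact ⟨Finset.mem_univ _, i₀, rfl, hi₀⟩⟩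
    set k := K.max' hKne with hk
    have hkK := Finset.mem_filter.mp (K.max'_mem hKne)
    obtain ⟨-, a₀, hβa₀, hva₀⟩ := hkK
    have htop : ∀ i, k < β i → v i = 0 := by
      intro i hki
      by_contra hvi
      have hmem : β i ∈ K := Finset.mem_filter.mpr ⟨Finset.mem_univ _, i, rfl, hvi⟩
      exact absurd (K.le_max' _ hmem) (not_le.mpr hki)
    refine ⟨k, ?_, ?_⟩
    · rw [hphi1, phi_NF hmono hn hβa₀ hva₀ htop]
    · rw [hq1, chain hmono hn g hg v k a₀ hβa₀ hva₀ htop]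

theorem count_I (hmono : StrictMono n) (hn : ∀ j, 0 < n j)
    (g : Fin t → I) (hg : ∀ j, β (g j) = j) :
    Nat.card (Quot (SymOrbitRel p (∀ i, ZMod (Mv p n β i)))) = t + 1 := by
  classical
  have hlift : ∀ c d, SymOrbitRel p (∀ i, ZMod (Mv p n β i)) c d →
      (⟨phi n β c, Nat.lt_succ_of_le (phi_le c)⟩ : Fin (t + 1))
        = ⟨phi n β d, Nat.lt_succ_of_le (phi_le d)⟩ := by
    intro c d h
    exact Fin.ext (phi_rel hn h)
  set F : Quot (SymOrbitRel p (∀ i, ZMod (Mv p n β i))) → Fin (t + 1) :=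
    Quot.lift (fun c => (⟨phi n β c, Nat.lt_succ_of_le (phi_le c)⟩ : Fin (t + 1))) hlift
    with hF
  set G : Fin (t + 1) → Quot (SymOrbitRel p (∀ i, ZMod (Mv p n β i))) :=
    fun k => Quot.mk _ (Fin.cases (motive := fun _ => Xt p (∀ i, ZMod (Mv p n β i)))
      zeroX (fun j => nfX hn (Pi.single (g j) 1)) k) with hG
  have hFmk : ∀ c, F (Quot.mk _ c) = ⟨phi n β c, Nat.lt_succ_of_le (phi_le c)⟩ :=
    fun _ => rfl
  have hright : ∀ k, F (G k) = k := by
    intro k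
    induction k using Fin.cases with
    | zero =>
      rw [hG]
      simp only [Fin.cases_zero]
      rw [hFmk]
      exact Fin.ext phi_zeroX
    | succ j =>
      rw [hG]
      simp only [Fin.cases_succ]
      rw [hFmk]
      refine Fin.ext ?_
      show phi n β (nfX hn (Pi.single (g j) 1 : I → ZMod p)) = ((j.succ : Fin (t + 1)) : ℕ)
      have h1 : (Pi.single (g j) (1 : ZMod p) : I → ZMod p) (g j) ≠ 0 := by
        rw [Pi.single_eq_same]
        exact one_ne_zero
      have h2 : ∀ i, j < β i → (Pi.single (g j) (1 : ZMod p) : I → ZMod p) i = 0 := by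
        intro i hij
        refine Pi.single_eq_of_ne ?_ _
        intro hik
        rw [hik, hg] at hij
        exact lt_irrefl _ hij
      rw [phi_NF hmono hn (hg j) h1 h2]
      rfl
  have hleft : ∀ q, G (F q) = q := by
    intro q
    refine @Quot.ind _ _ (fun q => G (F q) = q) ?_ q
    intro c
    rcases classify hmono hn g hg c with ⟨h0, hq⟩ | ⟨k, hk, hq⟩
    · rw [hFmk, hG]
      have : (⟨phi n β c, Nat.lt_succ_of_le (phi_le c)⟩ : Fin (t + 1)) = 0 :=
        Fin.ext h0
      rw [this]
      simp only [Fin.cases_zero]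
      exact hq.symm
    · rw [hFmk, hG]
      have : (⟨phi n β c, Nat.lt_succ_of_le (phi_le c)⟩ : Fin (t + 1)) = Fin.succ k :=
        Fin.ext hk
      rw [this]
      simp only [Fin.cases_succ]
      exact hq.symm
  have e : Quot (SymOrbitRel p (∀ i, ZMod (Mv p n β i))) ≃ Fin (t + 1) :=
    ⟨F, G, hleft, hright⟩
  rw [Nat.card_congr e, Nat.card_eq_fintype_card, Fintype.card_fin]

end Chain

section Transport

variable {p : ℕ}

/-- transfer of symmetric cocycles along an additive equivalence. -/
def XtMap {G H : Type*} [AddCommGroup G] [AddCommGroup H] (e : G ≃+ H)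
    (c : Xt p G) : Xt p H :=
  ⟨fun x y => c.1 (e.symm x) (e.symm y),
    isCocycle_pullback c.2.1 e.symm.toAddMonoidHom, fun x y => c.2.2 _ _⟩

theorem XtMap_rel {G H : Type*} [AddCommGroup G] [AddCommGroup H] (e : G ≃+ H)
    {c d : Xt p G} (h : SymOrbitRel p G c d) :
    SymOrbitRel p H (XtMap e c) (XtMap e d) := by
  obtain ⟨σ, lam, f, hrel⟩ := h
  refine ⟨(e.symm.trans σ).trans e, lam, fun z => f (e.symm z), fun x y => ?_⟩
  have h1 : ∀ z, e.symm (((e.symm.trans σ).trans e).symm z) = σ.symm (e.symm z) := by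
    intro z
    simp [AddEquiv.symm_trans_apply]
  show d.1 (e.symm x) (e.symm y)
      = (lam : ZMod p) * c.1 (e.symm (((e.symm.trans σ).trans e).symm x))
          (e.symm (((e.symm.trans σ).trans e).symm y))
        + (f (e.symm y) - f (e.symm (x + y)) + f (e.symm x))
  rw [h1, h1, map_add e.symm]
  exact hrel (e.symm x) (e.symm y)

theorem card_transport {G H : Type*} [AddCommGroup G] [AddCommGroup H] (e : G ≃+ H) :
    Nat.card (Quot (SymOrbitRel p G)) = Nat.card (Quot (SymOrbitRel p H)) := by
  have hGH : ∀ c : Xt p G, XtMap e.symm (XtMap e c) = c := by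
    intro c
    refine Subtype.ext ?_
    funext x y
    show c.1 (e.symm (e.symm.symm x)) (e.symm (e.symm.symm y)) = c.1 x y
    rw [AddEquiv.symm_symm, e.symm_apply_apply, e.symm_apply_apply]
  have hHG : ∀ c : Xt p H, XtMap e (XtMap e.symm c) = c := by
    intro c
    refine Subtype.ext ?_
    funext x y
    show c.1 (e.symm.symm (e.symm x)) (e.symm.symm (e.symm y)) = c.1 x y
    rw [AddEquiv.symm_symm, e.apply_symm_apply, e.apply_symm_apply]
  refine Nat.card_congr ⟨Quot.map (XtMap e) (fun a b h => XtMap_rel e h),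
    Quot.map (XtMap e.symm) (fun a b h => XtMap_rel e.symm h), ?_, ?_⟩
  · intro q
    refine @Quot.ind _ _ (fun q => Quot.map (XtMap e.symm) (fun a b h => XtMap_rel e.symm h)
      (Quot.map (XtMap e) (fun a b h => XtMap_rel e h) q) = q) ?_ q
    intro c
    show Quot.mk _ (XtMap e.symm (XtMap e c)) = Quot.mk _ c
    rw [hGH]
  · intro q
    refine @Quot.ind _ _ (fun q => Quot.map (XtMap e) (fun a b h => XtMap_rel e h)
      (Quot.map (XtMap e.symm) (fun a b h => XtMap_rel e.symm h) q) = q) ?_ q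
    intro c
    show Quot.mk _ (XtMap e (XtMap e.symm c)) = Quot.mk _ c
    rw [hHG]

end Transport

end Stmt15

/-- For an odd prime `p` and `G = ⊕_{j} (Z/p^{n_j})^{r_j}` with `n₁ < ⋯ < n_t`
(so exactly `t` distinct orders occur among the cyclic invariant factors), the
number of orbits of `Aut(G) × F_p^*` on `Ext¹(G, F_p)` (the classes of abelian
extensions, represented by symmetric cocycles) is exactly `t + 1`. -/
theorem stmt15 (p : ℕ) [Fact p.Prime] (hodd : Odd p)
    (t : ℕ) (ht : 0 < t) (n : Fin t → ℕ) (hmono : StrictMono n) (hn : ∀ j, 0 < n j)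
    (r : Fin t → ℕ) (hr : ∀ j, 0 < r j) :
    Nat.card (Quot (SymOrbitRel p (∀ j : Fin t, Fin (r j) → ZMod (p ^ n j))))
      = t + 1 := by
  classical
  set I := (Σ j : Fin t, Fin (r j)) with hI
  set β : I → Fin t := Sigma.fst with hβ
  set g : Fin t → I := fun j => ⟨j, ⟨0, hr j⟩⟩ with hgdef
  have hg : ∀ j, β (g j) = j := fun j => rfl
  have E : (∀ i : I, ZMod (Stmt15.Mv p n β i)) ≃+ (∀ j : Fin t, Fin (r j) → ZMod (p ^ n j)) :=
    { toEquiv := Equiv.piCurry (fun (j : Fin t) (_ : Fin (r j)) => ZMod (p ^ n j))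
      map_add' := fun _ _ => rfl }
  rw [← Stmt15.card_transport E]
  exact Stmt15.count_I hmono hn g hg
end

section
/- Let p be an odd prime, G a finite abelian p-group of exponent p^n, minimally generated by d ≥ 2 elements, V = G/pG. The map sending a nonzero class [f ∪ g] in the image of the cup product H^1(G;F_p) × H^1(G;F_p) → H^2(G;F_p) (with f, g ∈ Hom(G, F_p) linearly independent) to the subgroup ker f ∩ ker g of G is a well-defined bijection from the projectivization P(im ∪) onto the set of subgroups M of G such that G/M is elementary abelian of rank 2. -/
/-- Linear independence of two homomorphisms `f, g : G → F_p` over `F_p`. -/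
def Indep (p : ℕ) {G : Type*} [AddCommGroup G] (f g : G →+ ZMod p) : Prop :=
  ∀ a b : ZMod p, (∀ x : G, a * f x + b * g x = 0) → a = 0 ∧ b = 0

lemma nonempty_linearEquiv_prod_of_card_eq_sq {K Q : Type*} [Field K] [Finite K] [AddCommGroup Q]
    [Module K Q] [Finite Q] (hQ : Nat.card Q = Nat.card K ^ 2) : Nonempty (Q ≃ₗ[K] K × K) := by
  refine FiniteDimensional.nonempty_linearEquiv_of_finrank_eq ?_
  rw [Module.finrank_prod, Module.finrank_self]
  rw [Module.natCard_eq_pow_finrank (K := K)] at hQ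
  exact Nat.pow_right_injective Finite.one_lt_card hQ

/-- Only the antisymmetric part `(a d - b c) f ∧ g` survives: `φ x ψ y + φ y ψ x` is the
coboundary of `-φψ`, and `φ x φ y` that of `-φ²/2`. -/
lemma exists_coboundary_of_linear_combination {G K : Type*} [AddCommGroup G] [Field K]
    (h2 : (2 : K) ≠ 0) (f g : G →+ K) (a b c d : K) :
    ∃ h : G → K, ∀ x y, (a * f x + b * g x) * (c * f y + d * g y) =
      (a * d - b * c) * (f x * g y) + (h y - h (x + y) + h x) := by
  refine ⟨fun z => -(a * c * f z ^ 2 / 2 + b * d * g z ^ 2 / 2 + b * c * f z * g z),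
    fun x y => ?_⟩
  simp only [map_add]
  field_simp
  ring

section

variable {p : ℕ} {G : Type*} [AddCommGroup G]

lemma pMul_le_ker (φ : G →+ ZMod p) : pMul p G ≤ φ.ker := by
  rintro _ ⟨y, rfl⟩
  simp

lemma AddMonoidHom.map_zmod_val_nsmul [NeZero p] (φ : G →+ ZMod p) (c : ZMod p) (z : G) :
    φ (c.val • z) = c * φ z := by
  rw [map_nsmul, nsmul_eq_mul, ZMod.natCast_zmod_val]

lemma indep_of_surjective_prod {f g : G →+ ZMod p} (hfg : Function.Surjective (f.prod g)) :
    Indep p f g := by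
  intro a b hab
  obtain ⟨x, hx⟩ := hfg (1, 0)
  obtain ⟨y, hy⟩ := hfg (0, 1)
  simp only [AddMonoidHom.prod_apply, Prod.mk.injEq] at hx hy
  simpa [hx, hy] using And.intro (hab x) (hab y)

lemma Indep.mem_ker_inf_iff {f g : G →+ ZMod p} (hfg : Indep p f g) (x : G) :
    x ∈ f.ker ⊓ g.ker ↔ ∀ y, f x * g y - f y * g x = 0 := by
  simp only [AddSubgroup.mem_inf, AddMonoidHom.mem_ker]
  refine ⟨fun ⟨hf, hg⟩ y => by simp [hf, hg], fun h => ?_⟩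
  obtain ⟨hg, hf⟩ := hfg (g x) (-f x) fun y => by linear_combination -h y
  exact ⟨neg_eq_zero.mp hf, hg⟩

lemma ker_inf_eq_of_cohomologous {f g f' g' : G →+ ZMod p} (hfg : Indep p f g)
    (hf'g' : Indep p f' g') (lam : (ZMod p)ˣ) (h : G → ZMod p)
    (H : ∀ x y, f' x * g' y = lam * (f x * g y) + (h y - h (x + y) + h x)) :
    f.ker ⊓ g.ker = f'.ker ⊓ g'.ker := by
  have hwedge : ∀ x y, f' x * g' y - f' y * g' x = lam * (f x * g y - f y * g x) := by
    intro x y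
    have H' := H y x
    rw [add_comm y x] at H'
    linear_combination H x y - H'
  ext x
  simp only [hfg.mem_ker_inf_iff, hf'g'.mem_ker_inf_iff, hwedge, Units.mul_right_eq_zero]

variable [Fact p.Prime]

/-- A proper subgroup of `𝔽ₚ²` lies in the kernel of a nonzero functional, which would be a
nontrivial linear relation between `f` and `g`. -/
lemma Indep.surjective_prod {f g : G →+ ZMod p} (hfg : Indep p f g) :
    Function.Surjective (f.prod g) := by
  rw [← AddMonoidHom.range_eq_top]
  by_contra hR
  obtain ⟨ℓ, hℓ0, hℓ⟩ := Submodule.exists_le_ker_of_lt_top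
    (AddSubgroup.toZModSubmodule p (f.prod g).range) (by simpa [lt_top_iff_ne_top] using hR)
  have hℓ_apply : ∀ u v : ZMod p, ℓ (u, v) = ℓ (1, 0) * u + ℓ (0, 1) * v := by
    intro u v
    rw [show ((u, v) : ZMod p × ZMod p) = u • (1, 0) + v • (0, 1) by simp, map_add,
      map_smul, map_smul, smul_eq_mul, smul_eq_mul, mul_comm u, mul_comm v]
  obtain ⟨h10, h01⟩ := hfg (ℓ (1, 0)) (ℓ (0, 1)) fun x => by
    rw [← hℓ_apply]
    exact hℓ (AddMonoidHom.mem_range.mpr ⟨x, rfl⟩)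
  exact hℓ0 (LinearMap.ext fun ⟨u, v⟩ => by rw [hℓ_apply, h10, h01]; simp)

lemma Indep.index_ker_inf {f g : G →+ ZMod p} (hfg : Indep p f g) :
    (f.ker ⊓ g.ker).index = p ^ 2 := by
  rw [← AddMonoidHom.ker_prod, AddSubgroup.index_ker,
    AddMonoidHom.range_eq_top.mpr hfg.surjective_prod, AddSubgroup.card_top, Nat.card_prod,
    Nat.card_zmod, sq]

lemma Indep.exists_eq_linear_combination {f g : G →+ ZMod p} (hfg : Indep p f g)
    {φ : G →+ ZMod p} (hφ : f.ker ⊓ g.ker ≤ φ.ker) :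
    ∃ a b : ZMod p, ∀ z, φ z = a * f z + b * g z := by
  obtain ⟨x₀, hx₀⟩ := hfg.surjective_prod (1, 0)
  obtain ⟨y₀, hy₀⟩ := hfg.surjective_prod (0, 1)
  simp only [AddMonoidHom.prod_apply, Prod.mk.injEq] at hx₀ hy₀
  refine ⟨φ x₀, φ y₀, fun z => ?_⟩
  have hw : z - ((f z).val • x₀ + (g z).val • y₀) ∈ φ.ker := hφ <| by
    simp [AddMonoidHom.map_zmod_val_nsmul, hx₀, hy₀]
  rw [AddMonoidHom.mem_ker, map_sub, map_add, φ.map_zmod_val_nsmul, φ.map_zmod_val_nsmul,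
    sub_eq_zero] at hw
  rw [hw]
  ring

lemma Indep.det_ne_zero {f g f' g' : G →+ ZMod p} (hf'g' : Indep p f' g') {a b c d : ZMod p}
    (hf' : ∀ z, f' z = a * f z + b * g z) (hg' : ∀ z, g' z = c * f z + d * g z) :
    a * d - b * c ≠ 0 := by
  intro hdet
  obtain ⟨-, hb⟩ := hf'g' d (-b) fun z => by
    rw [hf', hg']; linear_combination f z * hdet
  obtain ⟨-, ha⟩ := hf'g' (-c) a fun z => by
    rw [hf', hg']; linear_combination g z * hdet
  exact one_ne_zero (hf'g' 1 0 fun z => by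
    simp only [hf', ha, neg_eq_zero.mp hb, one_mul, zero_mul, add_zero]).1

lemma exists_indep_ker_inf_eq {M : AddSubgroup G} (hpM : pMul p G ≤ M) (hM : M.index = p ^ 2) :
    ∃ f g : G →+ ZMod p, Indep p f g ∧ f.ker ⊓ g.ker = M := by
  let _ : Module (ZMod p) (G ⧸ M) := QuotientAddGroup.zmodModule fun x => hpM ⟨x, rfl⟩
  have : M.FiniteIndex := ⟨by rw [hM]; exact pow_ne_zero 2 (Fact.out : p.Prime).ne_zero⟩
  obtain ⟨e⟩ : Nonempty ((G ⧸ M) ≃ₗ[ZMod p] ZMod p × ZMod p) :=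
    nonempty_linearEquiv_prod_of_card_eq_sq (by rw [← AddSubgroup.index, hM, Nat.card_zmod])
  let Φ : G →+ ZMod p × ZMod p := e.toAddMonoidHom.comp (QuotientAddGroup.mk' M)
  refine ⟨(AddMonoidHom.fst _ _).comp Φ, (AddMonoidHom.snd _ _).comp Φ,
    indep_of_surjective_prod fun v => ?_, ?_⟩
  · obtain ⟨q, rfl⟩ := e.surjective v
    obtain ⟨x, rfl⟩ := QuotientAddGroup.mk_surjective q
    exact ⟨x, rfl⟩
  · rw [← AddMonoidHom.ker_prod]
    change Φ.ker = M
    ext x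
    exact e.map_eq_zero_iff.trans (QuotientAddGroup.eq_zero_iff x)

end

theorem stmt17_general (p : ℕ) [Fact p.Prime] (hodd : Odd p)
    (G : Type*) [AddCommGroup G] :
    (∀ f g : G →+ ZMod p, Indep p f g →
        pMul p G ≤ f.ker ⊓ g.ker ∧ (f.ker ⊓ g.ker).index = p ^ 2) ∧
    (∀ f g f' g' : G →+ ZMod p, Indep p f g → Indep p f' g' →
        (∃ (lam : (ZMod p)ˣ) (h : G → ZMod p), ∀ x y : G,
            f' x * g' y = (lam : ZMod p) * (f x * g y) + (h y - h (x + y) + h x)) →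
        f.ker ⊓ g.ker = f'.ker ⊓ g'.ker) ∧
    (∀ f g f' g' : G →+ ZMod p, Indep p f g → Indep p f' g' →
        f.ker ⊓ g.ker = f'.ker ⊓ g'.ker →
        ∃ (lam : (ZMod p)ˣ) (h : G → ZMod p), ∀ x y : G,
          f' x * g' y = (lam : ZMod p) * (f x * g y) + (h y - h (x + y) + h x)) ∧
    (∀ M : AddSubgroup G, pMul p G ≤ M → M.index = p ^ 2 →
        ∃ f g : G →+ ZMod p, Indep p f g ∧ f.ker ⊓ g.ker = M) := by
  have h2 : (2 : ZMod p) ≠ 0 := Ring.two_ne_zero <| by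
    rw [ZMod.ringChar_zmod_n]
    rintro rfl
    exact Nat.not_odd_iff_even.mpr even_two hodd
  refine ⟨fun f g hfg => ⟨le_inf (pMul_le_ker f) (pMul_le_ker g), hfg.index_ker_inf⟩,
    fun f g f' g' hfg hf'g' ⟨lam, h, H⟩ => ker_inf_eq_of_cohomologous hfg hf'g' lam h H,
    fun f g f' g' hfg hf'g' hM => ?_, fun M hpM hM => exists_indep_ker_inf_eq hpM hM⟩
  obtain ⟨a, b, hf'⟩ := hfg.exists_eq_linear_combination (hM ▸ inf_le_left : _ ≤ f'.ker)
  obtain ⟨c, d, hg'⟩ := hfg.exists_eq_linear_combination (hM ▸ inf_le_right : _ ≤ g'.ker)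
  obtain ⟨h, hh⟩ := exists_coboundary_of_linear_combination h2 f g a b c d
  exact ⟨Units.mk0 _ (hf'g'.det_ne_zero hf' hg'), h, fun x y => by rw [hf', hg']; exact hh x y⟩

/-- The map sending a nonzero projective class `[f ∪ g]` in the image of the cup
product `H¹ × H¹ → H²` (with `f, g` linearly independent) to `ker f ∩ ker g` is a
well-defined bijection from `P(im ∪)` onto the set of subgroups `M ≤ G` with `G/M`
elementary abelian of rank `2` (i.e. `pG ≤ M` and `|G : M| = p²`). Projective
equality of classes `[f' ∪ g'] = λ·[f ∪ g]` is expressed as equality of cocycles up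
to a coboundary. -/
theorem stmt17 (p : ℕ) [Fact p.Prime] (hodd : Odd p)
    (G : Type*) [AddCommGroup G] [Finite G]
    (hpG : ∀ g : G, ∃ k : ℕ, p ^ k • g = 0)
    (pn : ℕ) (hexp : ∀ g : G, (p ^ pn) • g = 0)
    (d : ℕ)
    (hd : IsLeast {m : ℕ | ∃ s : Finset G, s.card = m ∧ AddSubgroup.closure (↑s : Set G) = ⊤} d)
    (hd2 : 2 ≤ d) :
    (∀ f g : G →+ ZMod p, Indep p f g →
        pMul p G ≤ f.ker ⊓ g.ker ∧ (f.ker ⊓ g.ker).index = p ^ 2) ∧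
    (∀ f g f' g' : G →+ ZMod p, Indep p f g → Indep p f' g' →
        (∃ (lam : (ZMod p)ˣ) (h : G → ZMod p), ∀ x y : G,
            f' x * g' y = (lam : ZMod p) * (f x * g y) + (h y - h (x + y) + h x)) →
        f.ker ⊓ g.ker = f'.ker ⊓ g'.ker) ∧
    (∀ f g f' g' : G →+ ZMod p, Indep p f g → Indep p f' g' →
        f.ker ⊓ g.ker = f'.ker ⊓ g'.ker →
        ∃ (lam : (ZMod p)ˣ) (h : G → ZMod p), ∀ x y : G,
          f' x * g' y = (lam : ZMod p) * (f x * g y) + (h y - h (x + y) + h x)) ∧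
    (∀ M : AddSubgroup G, pMul p G ≤ M → M.index = p ^ 2 →
        ∃ f g : G →+ ZMod p, Indep p f g ∧ f.ker ⊓ g.ker = M) :=
  stmt17_general p hodd G
end
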